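/- arXiv:math/0601490 — 2 statements merged into one kernel-verified Lean document; each statement's English description precedes it below -/
import Mathlib

section
/- s-Normality Lemma: for every diversified arrow term f of M≡ there is a developed s-normal arrow term f' of the same type such that f = f' in M≡; moreover, if f is r-less, then f' is r-less too. -/
/-! Formalization of categories of proofs for linear equality (Dosen-Petric),
with the generality functor G into the category Br of Brauerian diagrams,
represented here by the matching relation on occurrences of variables. -/

namespace DP

/-- Formulae: atomic formulae `x R y` (for the binary predicate in question),
the constant true, and conjunctions. -/
inductive Fm (V : Type) : Type
  | rel : V → V → Fm V
  | top : Fm V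
  | and : Fm V → Fm V → Fm V

/-- Occurrences of variables in a formula: `false`/`true` are respectively the
left-hand and right-hand occurrences of variables in an atomic formula. -/
def Occ {V : Type} : Fm V → Type
  | .rel _ _ => Bool
  | .top => Empty
  | .and A B => Occ A ⊕ Occ B

/-- The matching relation on `source ⊕ target` induced by a relabelling function
from target occurrences to source occurrences. -/
def relabel {α β : Type} (φ : β → α) : α ⊕ β → α ⊕ β → Prop :=
  fun u v => (∃ o, u = Sum.inl (φ o) ∧ v = Sum.inr o) ∨
             (∃ o, u = Sum.inr o ∧ v = Sum.inl (φ o))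

/-- The matching relation induced by a relabelling function from source occurrences
to target occurrences. -/
def corelabel {α β : Type} (ψ : α → β) : α ⊕ β → α ⊕ β → Prop :=
  fun u v => (∃ o, u = Sum.inl o ∧ v = Sum.inr (ψ o)) ∨
             (∃ o, u = Sum.inr (ψ o) ∧ v = Sum.inl o)

/-- Horizontal (side-by-side) composition of Brauerian diagrams. -/
def tensRel {α β γ δ : Type}
    (p : α ⊕ β → α ⊕ β → Prop) (q : γ ⊕ δ → γ ⊕ δ → Prop) :
    (α ⊕ γ) ⊕ (β ⊕ δ) → (α ⊕ γ) ⊕ (β ⊕ δ) → Prop :=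
  fun u v =>
    (∃ x y, p x y ∧ u = Sum.map Sum.inl Sum.inl x ∧ v = Sum.map Sum.inl Sum.inl y) ∨
    (∃ x y, q x y ∧ u = Sum.map Sum.inr Sum.inr x ∧ v = Sum.map Sum.inr Sum.inr y)

/-- Vertical composition of Brauerian diagrams: two endpoints are matched in the
composite when they are joined by a path of edges through the middle points. -/
def compRel {α β γ : Type}
    (p : α ⊕ β → α ⊕ β → Prop) (q : β ⊕ γ → β ⊕ γ → Prop) :
    α ⊕ γ → α ⊕ γ → Prop :=
  fun u v => u ≠ v ∧
    Relation.ReflTransGen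
      (fun s t : α ⊕ β ⊕ γ =>
        (∃ x y, p x y ∧ s = Sum.map (fun a => a) Sum.inl x ∧
                        t = Sum.map (fun a => a) Sum.inl y) ∨
        (∃ x y, q x y ∧ s = Sum.inr x ∧ t = Sum.inr y))
      (Sum.map (fun a => a) Sum.inr u) (Sum.map (fun a => a) Sum.inr v)

/-- Arrow terms. -/
inductive Ar (V : Type) : Fm V → Fm V → Type
  | id (A : Fm V) : Ar V A A
  | comp {A B C : Fm V} : Ar V B C → Ar V A B → Ar V A C
  | tens {A B C D : Fm V} : Ar V A B → Ar V C D → Ar V (.and A C) (.and B D)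
  | bto (A B C : Fm V) : Ar V (.and A (.and B C)) (.and (.and A B) C)
  | bfrom (A B C : Fm V) : Ar V (.and (.and A B) C) (.and A (.and B C))
  | dto (A : Fm V) : Ar V (.and A .top) A
  | dfrom (A : Fm V) : Ar V A (.and A .top)
  | sto (A : Fm V) : Ar V (.and .top A) A
  | sfrom (A : Fm V) : Ar V A (.and .top A)
  | r (x : V) : Ar V .top (.rel x x)
  | t (x y z : V) : Ar V (.and (.rel x y) (.rel y z)) (.rel x z)
  | s (x y : V) : Ar V (.rel x y) (.rel y x)

/-- The Brauerian diagram (matching relation on occurrences of variables in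
source and target) associated with an arrow term: the image under the functor G. -/
def GRel {V : Type} : ∀ {A B : Fm V}, Ar V A B → (Occ A ⊕ Occ B → Occ A ⊕ Occ B → Prop)
  | _, _, .id _ => relabel (fun o => o)
  | _, _, .comp g f => compRel (GRel f) (GRel g)
  | _, _, .tens f g => tensRel (GRel f) (GRel g)
  | _, _, .bto _ _ _ => relabel (fun o =>
      match o with
      | Sum.inl (Sum.inl a) => Sum.inl a
      | Sum.inl (Sum.inr b) => Sum.inr (Sum.inl b)
      | Sum.inr c => Sum.inr (Sum.inr c))
  | _, _, .bfrom _ _ _ => relabel (fun o =>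
      match o with
      | Sum.inl a => Sum.inl (Sum.inl a)
      | Sum.inr (Sum.inl b) => Sum.inl (Sum.inr b)
      | Sum.inr (Sum.inr c) => Sum.inr c)
  | _, _, .dto _ => relabel Sum.inl
  | _, _, .dfrom _ => corelabel Sum.inl
  | _, _, .sto _ => relabel Sum.inr
  | _, _, .sfrom _ => corelabel Sum.inr
  | _, _, .r _ => fun u v =>
      (u = Sum.inr false ∧ v = Sum.inr true) ∨ (u = Sum.inr true ∧ v = Sum.inr false)
  | _, _, .t _ _ _ => fun u v =>
      (u = Sum.inl (Sum.inl false) ∧ v = Sum.inr false) ∨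
      (u = Sum.inr false ∧ v = Sum.inl (Sum.inl false)) ∨
      (u = Sum.inl (Sum.inr true) ∧ v = Sum.inr true) ∨
      (u = Sum.inr true ∧ v = Sum.inl (Sum.inr true)) ∨
      (u = Sum.inl (Sum.inl true) ∧ v = Sum.inl (Sum.inr false)) ∨
      (u = Sum.inl (Sum.inr false) ∧ v = Sum.inl (Sum.inl true))
  | _, _, .s _ _ => relabel (fun o => !o)

/-- Equality of arrow terms: the smallest congruence generated by the defining
equations of the category. -/
inductive Eqv {V : Type} : ∀ {A B : Fm V}, Ar V A B → Ar V A B → Prop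
  | refl {A B : Fm V} (f : Ar V A B) : Eqv f f
  | symm {A B : Fm V} {f g : Ar V A B} : Eqv f g → Eqv g f
  | trans {A B : Fm V} {f g h : Ar V A B} : Eqv f g → Eqv g h → Eqv f h
  | congr_comp {A B C : Fm V} {g g' : Ar V B C} {f f' : Ar V A B} :
      Eqv g g' → Eqv f f' → Eqv (g.comp f) (g'.comp f')
  | congr_tens {A B C D : Fm V} {f f' : Ar V A B} {g g' : Ar V C D} :
      Eqv f f' → Eqv g g' → Eqv (f.tens g) (f'.tens g')
  | id_comp {A B : Fm V} (f : Ar V A B) : Eqv ((Ar.id B).comp f) f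
  | comp_id {A B : Fm V} (f : Ar V A B) : Eqv (f.comp (Ar.id A)) f
  | comp_assoc {A B C D : Fm V} (h : Ar V C D) (g : Ar V B C) (f : Ar V A B) :
      Eqv ((h.comp g).comp f) (h.comp (g.comp f))
  | tens_id (A B : Fm V) : Eqv ((Ar.id A).tens (Ar.id B)) (Ar.id (.and A B))
  | tens_comp {A1 B1 C1 A2 B2 C2 : Fm V} (g1 : Ar V B1 C1) (f1 : Ar V A1 B1)
      (g2 : Ar V B2 C2) (f2 : Ar V A2 B2) :
      Eqv ((g1.comp f1).tens (g2.comp f2)) ((g1.tens g2).comp (f1.tens f2))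
  | nat_b {A B C D E F : Fm V} (f : Ar V A D) (g : Ar V B E) (h : Ar V C F) :
      Eqv (((f.tens g).tens h).comp (Ar.bto A B C)) ((Ar.bto D E F).comp (f.tens (g.tens h)))
  | nat_d {A D : Fm V} (f : Ar V A D) :
      Eqv (f.comp (Ar.dto A)) ((Ar.dto D).comp (f.tens (Ar.id .top)))
  | nat_s {A D : Fm V} (f : Ar V A D) :
      Eqv (f.comp (Ar.sto A)) ((Ar.sto D).comp ((Ar.id .top).tens f))
  | bb1 (A B C : Fm V) : Eqv ((Ar.bfrom A B C).comp (Ar.bto A B C)) (Ar.id (.and A (.and B C)))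
  | bb2 (A B C : Fm V) : Eqv ((Ar.bto A B C).comp (Ar.bfrom A B C)) (Ar.id (.and (.and A B) C))
  | dd1 (A : Fm V) : Eqv ((Ar.dfrom A).comp (Ar.dto A)) (Ar.id (.and A .top))
  | dd2 (A : Fm V) : Eqv ((Ar.dto A).comp (Ar.dfrom A)) (Ar.id A)
  | ss1 (A : Fm V) : Eqv ((Ar.sfrom A).comp (Ar.sto A)) (Ar.id (.and .top A))
  | ss2 (A : Fm V) : Eqv ((Ar.sto A).comp (Ar.sfrom A)) (Ar.id A)
  | pent (A B C D : Fm V) :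
      Eqv ((Ar.bto (.and A B) C D).comp (Ar.bto A B (.and C D)))
        (((Ar.bto A B C).tens (Ar.id D)).comp
          ((Ar.bto A (.and B C) D).comp ((Ar.id A).tens (Ar.bto B C D))))
  | bds (A C : Fm V) :
      Eqv (Ar.bto A .top C) (((Ar.dfrom A).tens (Ar.id C)).comp ((Ar.id A).tens (Ar.sto C)))
  | rtd (x y : V) :
      Eqv ((Ar.t x y y).comp ((Ar.id (.rel x y)).tens (Ar.r y))) (Ar.dto (.rel x y))
  | rts (x y : V) :
      Eqv ((Ar.t y y x).comp ((Ar.r y).tens (Ar.id (.rel y x)))) (Ar.sto (.rel y x))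
  | tb (x y z u : V) :
      Eqv ((Ar.t x y u).comp ((Ar.id (.rel x y)).tens (Ar.t y z u)))
        ((Ar.t x z u).comp (((Ar.t x y z).tens (Ar.id (.rel z u))).comp
          (Ar.bto (.rel x y) (.rel y z) (.rel z u))))
  | sseq (x y : V) : Eqv ((Ar.s y x).comp (Ar.s x y)) (Ar.id (.rel x y))
  | rs (x : V) : Eqv ((Ar.s x x).comp (Ar.r x)) (Ar.r x)

/-- Primitive non-identity arrow terms. -/
inductive Prim {V : Type} : ∀ {A B : Fm V}, Ar V A B → Prop
  | bto (A B C : Fm V) : Prim (Ar.bto A B C)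
  | bfrom (A B C : Fm V) : Prim (Ar.bfrom A B C)
  | dto (A : Fm V) : Prim (Ar.dto A)
  | dfrom (A : Fm V) : Prim (Ar.dfrom A)
  | sto (A : Fm V) : Prim (Ar.sto A)
  | sfrom (A : Fm V) : Prim (Ar.sfrom A)
  | r (x : V) : Prim (Ar.r x)
  | t (x y z : V) : Prim (Ar.t x y z)
  | s (x y : V) : Prim (Ar.s x y)

/-- 1-terms: identities padded by identities. -/
inductive OneTerm {V : Type} : ∀ {A B : Fm V}, Ar V A B → Prop
  | id (A : Fm V) : OneTerm (Ar.id A)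
  | tensl (A : Fm V) {B C : Fm V} {f : Ar V B C} : OneTerm f → OneTerm ((Ar.id A).tens f)
  | tensr (A : Fm V) {B C : Fm V} {f : Ar V B C} : OneTerm f → OneTerm (f.tens (Ar.id A))

/-- Headed arrow terms: β-terms for some primitive non-identity β. -/
inductive Headed {V : Type} : ∀ {A B : Fm V}, Ar V A B → Prop
  | prim {A B : Fm V} {f : Ar V A B} : Prim f → Headed f
  | tensl (A : Fm V) {B C : Fm V} {f : Ar V B C} : Headed f → Headed ((Ar.id A).tens f)
  | tensr (A : Fm V) {B C : Fm V} {f : Ar V B C} : Headed f → Headed (f.tens (Ar.id A))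

/-- Factorized arrow terms all of whose factors are headed. -/
inductive HeadedSeq {V : Type} : ∀ {A B : Fm V}, Ar V A B → Prop
  | single {A B : Fm V} {f : Ar V A B} : Headed f → HeadedSeq f
  | comp {A B C : Fm V} {g : Ar V B C} {f : Ar V A B} :
      HeadedSeq g → HeadedSeq f → HeadedSeq (g.comp f)

/-- Developed arrow terms: f_n ∘ … ∘ f_1 with f_1 a 1-term and all other
factors headed. -/
inductive Developed {V : Type} : ∀ {A B : Fm V}, Ar V A B → Prop
  | one {A B : Fm V} {f : Ar V A B} : OneTerm f → Developed f
  | comp {A B C : Fm V} {g : Ar V B C} {f : Ar V A B} :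
      HeadedSeq g → Developed f → Developed (g.comp f)

/-- An arrow term is r-less when no `r` occurs in it. -/
def rLess {V : Type} : ∀ {A B : Fm V}, Ar V A B → Prop
  | _, _, .r _ => False
  | _, _, .comp g f => rLess g ∧ rLess f
  | _, _, .tens f g => rLess f ∧ rLess g
  | _, _, _ => True

/-- Number of occurrences of the variable x in a formula. -/
def countF {V : Type} [DecidableEq V] (x : V) : Fm V → ℕ
  | .rel a b => (if a = x then 1 else 0) + (if b = x then 1 else 0)
  | .top => 0
  | .and A B => countF x A + countF x B

/-- A type A ⊢ B is diversified when every variable occurring in it occurs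
exactly twice. -/
def Diversified {V : Type} [DecidableEq V] (A B : Fm V) : Prop :=
  ∀ x : V, countF x A + countF x B = 0 ∨ countF x A + countF x B = 2

/-- Number of occurrences of s with indices x,y or y,x in an arrow term. -/
def countS {V : Type} [DecidableEq V] (x y : V) : ∀ {A B : Fm V}, Ar V A B → ℕ
  | _, _, .s a b => if (a = x ∧ b = y) ∨ (a = y ∧ b = x) then 1 else 0
  | _, _, .comp g f => countS x y g + countS x y f
  | _, _, .tens f g => countS x y f + countS x y g
  | _, _, _ => 0

/-- An arrow term is s-normal when for every pair of variables (x,y) there is at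
most one occurrence of s in it with the indices x,y or y,x. -/
def sNormal {V : Type} [DecidableEq V] {A B : Fm V} (f : Ar V A B) : Prop :=
  ∀ x y : V, countS x y f ≤ 1


/-! ### Auxiliary development for the s-Normality Lemma -/

section Aux

variable {V : Type}

local infix:50 " ≋ " => Eqv

instance {A B : Fm V} : Trans (@Eqv V A B) (@Eqv V A B) (@Eqv V A B) :=
  ⟨Eqv.trans⟩

namespace Eqv

theorem comp_l {A B C : Fm V} {g g' : Ar V B C} (h : Eqv g g') (f : Ar V A B) :
    Eqv (g.comp f) (g'.comp f) := h.congr_comp (.refl f)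

theorem comp_r {A B C : Fm V} (g : Ar V B C) {f f' : Ar V A B} (h : Eqv f f') :
    Eqv (g.comp f) (g.comp f') := (Eqv.refl g).congr_comp h

/-- `f ⊗ g ≈ (f ⊗ 1) ∘ (1 ⊗ g)`. -/
theorem tens_split_r {A C D E : Fm V} (f : Ar V A D) (g : Ar V C E) :
    Eqv (f.tens g) ((f.tens (.id E)).comp ((Ar.id A).tens g)) :=
  (Eqv.congr_tens (Eqv.comp_id f).symm (Eqv.id_comp g).symm).trans
    (Eqv.tens_comp f (.id A) (.id E) g)

/-- `f ⊗ g ≈ (1 ⊗ g) ∘ (f ⊗ 1)`. -/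
theorem tens_split_l {A C D E : Fm V} (f : Ar V A D) (g : Ar V C E) :
    Eqv (f.tens g) (((Ar.id D).tens g).comp (f.tens (.id C))) :=
  (Eqv.congr_tens (Eqv.id_comp f).symm (Eqv.comp_id g).symm).trans
    (Eqv.tens_comp (.id D) f g (.id C))

/-- Inverse naturality for `dfrom`. -/
theorem nat_d' {A D : Fm V} (f : Ar V A D) :
    Eqv ((Ar.dfrom D).comp f) ((f.tens (.id .top)).comp (.dfrom A)) := by
  have h1 : (Ar.dfrom D).comp f ≋ (Ar.dfrom D).comp ((f.comp (Ar.dto A)).comp (Ar.dfrom A)) := by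
    refine Eqv.comp_r _ ?_
    calc f ≋ f.comp (Ar.id A) := (Eqv.comp_id f).symm
      _ ≋ f.comp ((Ar.dto A).comp (Ar.dfrom A)) := Eqv.comp_r _ (Eqv.dd2 A).symm
      _ ≋ (f.comp (Ar.dto A)).comp (Ar.dfrom A) := (Eqv.comp_assoc _ _ _).symm
  calc (Ar.dfrom D).comp f
      ≋ (Ar.dfrom D).comp ((f.comp (Ar.dto A)).comp (Ar.dfrom A)) := h1
    _ ≋ (Ar.dfrom D).comp (((Ar.dto D).comp (f.tens (.id .top))).comp (Ar.dfrom A)) :=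
        Eqv.comp_r _ (Eqv.comp_l (Eqv.nat_d f) _)
    _ ≋ ((Ar.dfrom D).comp ((Ar.dto D).comp (f.tens (.id .top)))).comp (Ar.dfrom A) :=
        (Eqv.comp_assoc _ _ _).symm
    _ ≋ (((Ar.dfrom D).comp (Ar.dto D)).comp (f.tens (.id .top))).comp (Ar.dfrom A) :=
        Eqv.comp_l (Eqv.comp_assoc _ _ _).symm _
    _ ≋ ((Ar.id _).comp (f.tens (.id .top))).comp (Ar.dfrom A) :=
        Eqv.comp_l (Eqv.comp_l (Eqv.dd1 D) _) _
    _ ≋ (f.tens (.id .top)).comp (Ar.dfrom A) := Eqv.comp_l (Eqv.id_comp _) _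

/-- Inverse naturality for `sfrom`. -/
theorem nat_s' {A D : Fm V} (f : Ar V A D) :
    Eqv ((Ar.sfrom D).comp f) (((Ar.id .top).tens f).comp (.sfrom A)) := by
  have h1 : (Ar.sfrom D).comp f ≋ (Ar.sfrom D).comp ((f.comp (Ar.sto A)).comp (Ar.sfrom A)) := by
    refine Eqv.comp_r _ ?_
    calc f ≋ f.comp (Ar.id A) := (Eqv.comp_id f).symm
      _ ≋ f.comp ((Ar.sto A).comp (Ar.sfrom A)) := Eqv.comp_r _ (Eqv.ss2 A).symm
      _ ≋ (f.comp (Ar.sto A)).comp (Ar.sfrom A) := (Eqv.comp_assoc _ _ _).symm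
  calc (Ar.sfrom D).comp f
      ≋ (Ar.sfrom D).comp ((f.comp (Ar.sto A)).comp (Ar.sfrom A)) := h1
    _ ≋ (Ar.sfrom D).comp (((Ar.sto D).comp ((Ar.id .top).tens f)).comp (Ar.sfrom A)) :=
        Eqv.comp_r _ (Eqv.comp_l (Eqv.nat_s f) _)
    _ ≋ ((Ar.sfrom D).comp ((Ar.sto D).comp ((Ar.id .top).tens f))).comp (Ar.sfrom A) :=
        (Eqv.comp_assoc _ _ _).symm
    _ ≋ (((Ar.sfrom D).comp (Ar.sto D)).comp ((Ar.id .top).tens f)).comp (Ar.sfrom A) :=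
        Eqv.comp_l (Eqv.comp_assoc _ _ _).symm _
    _ ≋ ((Ar.id _).comp ((Ar.id .top).tens f)).comp (Ar.sfrom A) :=
        Eqv.comp_l (Eqv.comp_l (Eqv.ss1 D) _) _
    _ ≋ ((Ar.id .top).tens f).comp (Ar.sfrom A) := Eqv.comp_l (Eqv.id_comp _) _

/-- Inverse naturality for `bfrom`. -/
theorem nat_b' {A B C D E F : Fm V} (f : Ar V A D) (g : Ar V B E) (h : Ar V C F) :
    Eqv ((Ar.bfrom D E F).comp ((f.tens g).tens h))
      ((f.tens (g.tens h)).comp (Ar.bfrom A B C)) := by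
  have h1 : (f.tens g).tens h ≋
      ((((f.tens g).tens h).comp (Ar.bto A B C)).comp (Ar.bfrom A B C)) := by
    calc (f.tens g).tens h ≋ ((f.tens g).tens h).comp (Ar.id _) := (Eqv.comp_id _).symm
      _ ≋ ((f.tens g).tens h).comp ((Ar.bto A B C).comp (Ar.bfrom A B C)) :=
          Eqv.comp_r _ (Eqv.bb2 A B C).symm
      _ ≋ (((f.tens g).tens h).comp (Ar.bto A B C)).comp (Ar.bfrom A B C) :=
          (Eqv.comp_assoc _ _ _).symm
  calc (Ar.bfrom D E F).comp ((f.tens g).tens h)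
      ≋ (Ar.bfrom D E F).comp ((((f.tens g).tens h).comp (Ar.bto A B C)).comp (Ar.bfrom A B C)) :=
        Eqv.comp_r _ h1
    _ ≋ (Ar.bfrom D E F).comp (((Ar.bto D E F).comp (f.tens (g.tens h))).comp (Ar.bfrom A B C)) :=
        Eqv.comp_r _ (Eqv.comp_l (Eqv.nat_b f g h) _)
    _ ≋ ((Ar.bfrom D E F).comp ((Ar.bto D E F).comp (f.tens (g.tens h)))).comp (Ar.bfrom A B C) :=
        (Eqv.comp_assoc _ _ _).symm
    _ ≋ (((Ar.bfrom D E F).comp (Ar.bto D E F)).comp (f.tens (g.tens h))).comp (Ar.bfrom A B C) :=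
        Eqv.comp_l (Eqv.comp_assoc _ _ _).symm _
    _ ≋ ((Ar.id _).comp (f.tens (g.tens h))).comp (Ar.bfrom A B C) :=
        Eqv.comp_l (Eqv.comp_l (Eqv.bb1 D E F) _) _
    _ ≋ (f.tens (g.tens h)).comp (Ar.bfrom A B C) := Eqv.comp_l (Eqv.id_comp _) _

end Eqv

end Aux

section Aux2

variable {V : Type}

local infix:50 " ≋ " => Eqv

/-- Pad an arrow on the right with an identity, distributing over compositions. -/
def padR (P : Fm V) : ∀ {X Y : Fm V}, Ar V X Y → Ar V (X.and P) (Y.and P)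
  | _, _, .comp g f => (padR P g).comp (padR P f)
  | _, _, g => g.tens (.id P)

/-- Pad an arrow on the left with an identity, distributing over compositions. -/
def padL (P : Fm V) : ∀ {X Y : Fm V}, Ar V X Y → Ar V (P.and X) (P.and Y)
  | _, _, .comp g f => (padL P g).comp (padL P f)
  | _, _, g => (Ar.id P).tens g

theorem padR_of_headed {P X Y : Fm V} {g : Ar V X Y} (h : Headed g) :
    padR P g = g.tens (.id P) := by
  cases h with
  | prim p => cases p <;> rfl
  | tensl _ _ => rfl
  | tensr _ _ => rfl

theorem padL_of_headed {P X Y : Fm V} {g : Ar V X Y} (h : Headed g) :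
    padL P g = (Ar.id P).tens g := by
  cases h with
  | prim p => cases p <;> rfl
  | tensl _ _ => rfl
  | tensr _ _ => rfl

theorem headedSeq_padR {P X Y : Fm V} {g : Ar V X Y} (h : HeadedSeq g) :
    HeadedSeq (padR P g) := by
  induction h with
  | single hh => rw [padR_of_headed hh]; exact .single (.tensr P hh)
  | comp h2 h1 ih2 ih1 => exact .comp ih2 ih1

theorem headedSeq_padL {P X Y : Fm V} {g : Ar V X Y} (h : HeadedSeq g) :
    HeadedSeq (padL P g) := by
  induction h with
  | single hh => rw [padL_of_headed hh]; exact .single (.tensl P hh)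
  | comp h2 h1 ih2 ih1 => exact .comp ih2 ih1

theorem padR_eqv {P X Y : Fm V} (g : Ar V X Y) : Eqv (padR P g) (g.tens (.id P)) := by
  induction g with
  | comp g f ihg ihf =>
      calc padR P (g.comp f) ≋ (g.tens (.id P)).comp (f.tens (.id P)) := ihg.congr_comp ihf
        _ ≋ ((g.comp f).tens ((Ar.id P).comp (.id P))) := (Eqv.tens_comp _ _ _ _).symm
        _ ≋ (g.comp f).tens (.id P) := (Eqv.refl _).congr_tens (Eqv.id_comp _)
  | _ => exact Eqv.refl _

theorem padL_eqv {P X Y : Fm V} (g : Ar V X Y) : Eqv (padL P g) ((Ar.id P).tens g) := by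
  induction g with
  | comp g f ihg ihf =>
      calc padL P (g.comp f) ≋ ((Ar.id P).tens g).comp ((Ar.id P).tens f) := ihg.congr_comp ihf
        _ ≋ (((Ar.id P).comp (.id P)).tens (g.comp f)) := (Eqv.tens_comp _ _ _ _).symm
        _ ≋ (Ar.id P).tens (g.comp f) := (Eqv.id_comp _).congr_tens (Eqv.refl _)
  | _ => exact Eqv.refl _

theorem countS_padR [DecidableEq V] {P X Y : Fm V} (x y : V) (g : Ar V X Y) :
    countS x y (padR P g) = countS x y g := by
  induction g <;> simp [padR, countS, *]

theorem countS_padL [DecidableEq V] {P X Y : Fm V} (x y : V) (g : Ar V X Y) :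
    countS x y (padL P g) = countS x y g := by
  induction g <;> simp [padL, countS, *]

theorem rLess_padR {P X Y : Fm V} {g : Ar V X Y} (h : rLess g) : rLess (padR P g) := by
  induction g <;> simp_all [padR, rLess]

theorem rLess_padL {P X Y : Fm V} {g : Ar V X Y} (h : rLess g) : rLess (padL P g) := by
  induction g <;> simp_all [padL, rLess]


@[simp] theorem countS_id [DecidableEq V] (x y : V) (A : Fm V) :
    countS x y (Ar.id A) = 0 := rfl
@[simp] theorem countS_comp_eq [DecidableEq V] {A B C : Fm V} (x y : V)
    (g : Ar V B C) (f : Ar V A B) :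
    countS x y (g.comp f) = countS x y g + countS x y f := rfl
@[simp] theorem countS_tens_eq [DecidableEq V] {A B C D : Fm V} (x y : V)
    (f : Ar V A B) (g : Ar V C D) :
    countS x y (f.tens g) = countS x y f + countS x y g := rfl
@[simp] theorem countS_s [DecidableEq V] (x y a b : V) :
    countS x y (Ar.s a b) = if (a = x ∧ b = y) ∨ (a = y ∧ b = x) then 1 else 0 := rfl
@[simp] theorem countS_bto [DecidableEq V] (x y : V) (A B C : Fm V) :
    countS x y (Ar.bto A B C) = 0 := rfl
@[simp] theorem countS_bfrom [DecidableEq V] (x y : V) (A B C : Fm V) :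
    countS x y (Ar.bfrom A B C) = 0 := rfl
@[simp] theorem countS_dto [DecidableEq V] (x y : V) (A : Fm V) :
    countS x y (Ar.dto A) = 0 := rfl
@[simp] theorem countS_dfrom [DecidableEq V] (x y : V) (A : Fm V) :
    countS x y (Ar.dfrom A) = 0 := rfl
@[simp] theorem countS_sto [DecidableEq V] (x y : V) (A : Fm V) :
    countS x y (Ar.sto A) = 0 := rfl
@[simp] theorem countS_sfrom [DecidableEq V] (x y : V) (A : Fm V) :
    countS x y (Ar.sfrom A) = 0 := rfl
@[simp] theorem countS_r [DecidableEq V] (x y a : V) :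
    countS x y (Ar.r a) = 0 := rfl
@[simp] theorem countS_t [DecidableEq V] (x y a b c : V) :
    countS x y (Ar.t a b c) = 0 := rfl

@[simp] theorem rLess_id (A : Fm V) : rLess (Ar.id A) := trivial
@[simp] theorem rLess_comp_eq {A B C : Fm V} (g : Ar V B C) (f : Ar V A B) :
    rLess (g.comp f) = (rLess g ∧ rLess f) := rfl
@[simp] theorem rLess_tens_eq {A B C D : Fm V} (f : Ar V A B) (g : Ar V C D) :
    rLess (f.tens g) = (rLess f ∧ rLess g) := rfl
@[simp] theorem rLess_s (a b : V) : rLess (Ar.s a b) := trivial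
@[simp] theorem rLess_t (a b c : V) : rLess (Ar.t a b c) := trivial
@[simp] theorem rLess_bto (A B C : Fm V) : rLess (Ar.bto A B C) := trivial
@[simp] theorem rLess_bfrom (A B C : Fm V) : rLess (Ar.bfrom A B C) := trivial
@[simp] theorem rLess_dto (A : Fm V) : rLess (Ar.dto A) := trivial
@[simp] theorem rLess_dfrom (A : Fm V) : rLess (Ar.dfrom A) := trivial
@[simp] theorem rLess_sto (A : Fm V) : rLess (Ar.sto A) := trivial
@[simp] theorem rLess_sfrom (A : Fm V) : rLess (Ar.sfrom A) := trivial
@[simp] theorem rLess_r_iff (a : V) : rLess (Ar.r a) = False := rfl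

/-- Normal forms: either an identity, or a headed sequence (composed with an identity). -/
inductive NF (V : Type) : Fm V → Fm V → Type
  | idn (A : Fm V) : NF V A A
  | hs {A B : Fm V} (g : Ar V A B) (h : HeadedSeq g) : NF V A B

namespace NF

def toAr : ∀ {A B : Fm V}, NF V A B → Ar V A B
  | A, _, idn _ => .id A
  | A, _, hs g _ => g.comp (.id A)

theorem developed_toAr : ∀ {A B : Fm V} (n : NF V A B), Developed n.toAr
  | A, _, idn _ => .one (.id A)
  | _, _, hs _ h => .comp h (.one (.id _))

def comp : ∀ {A B C : Fm V}, NF V B C → NF V A B → NF V A C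
  | _, _, _, idn _, n => n
  | _, _, _, hs g h, idn _ => hs g h
  | _, _, _, hs g2 h2, hs g1 h1 => hs (g2.comp g1) (h2.comp h1)

def tens : ∀ {A B C D : Fm V}, NF V A B → NF V C D → NF V (A.and C) (B.and D)
  | A, _, C, _, idn _, idn _ => idn (A.and C)
  | A, _, _, _, idn _, hs g h => hs (padL A g) (headedSeq_padL h)
  | _, _, C, _, hs g h, idn _ => hs (padR C g) (headedSeq_padR h)
  | _, B, C, _, hs g1 h1, hs g2 h2 =>
      hs ((padL B g2).comp (padR C g1)) (.comp (headedSeq_padL h2) (headedSeq_padR h1))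

theorem comp_eqv {A B C : Fm V} (n2 : NF V B C) (n1 : NF V A B) :
    Eqv (comp n2 n1).toAr (n2.toAr.comp n1.toAr) := by
  cases n2 with
  | idn =>
      show Eqv n1.toAr ((Ar.id _).comp n1.toAr)
      exact (Eqv.id_comp _).symm
  | hs g2 h2 =>
    cases n1 with
    | idn =>
        show Eqv (g2.comp (Ar.id _)) ((g2.comp (Ar.id _)).comp (Ar.id _))
        exact (Eqv.comp_id _).symm
    | hs g1 h1 =>
        show Eqv ((g2.comp g1).comp (Ar.id _)) ((g2.comp (Ar.id _)).comp (g1.comp (Ar.id _)))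
        refine Eqv.trans (Eqv.comp_id _) (Eqv.symm ?_)
        exact Eqv.trans (Eqv.comp_l (Eqv.comp_id g2) _) (Eqv.comp_r g2 (Eqv.comp_id g1))

theorem tens_eqv {A B C D : Fm V} (n1 : NF V A B) (n2 : NF V C D) :
    Eqv (tens n1 n2).toAr (n1.toAr.tens n2.toAr) := by
  cases n1 with
  | idn =>
    cases n2 with
    | idn =>
        show Eqv (Ar.id _) ((Ar.id _).tens (Ar.id _))
        exact (Eqv.tens_id _ _).symm
    | hs g h =>
        show Eqv ((padL _ g).comp (Ar.id _)) ((Ar.id _).tens (g.comp (Ar.id _)))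
        refine Eqv.trans (Eqv.comp_id _) (Eqv.trans (padL_eqv g) ?_)
        exact (Eqv.refl _).congr_tens (Eqv.comp_id g).symm
  | hs g1 h1 =>
    cases n2 with
    | idn =>
        show Eqv ((padR _ g1).comp (Ar.id _)) ((g1.comp (Ar.id _)).tens (Ar.id _))
        refine Eqv.trans (Eqv.comp_id _) (Eqv.trans (padR_eqv g1) ?_)
        exact (Eqv.comp_id g1).symm.congr_tens (Eqv.refl _)
    | hs g2 h2 =>
        show Eqv (((padL _ g2).comp (padR _ g1)).comp (Ar.id _))
          ((g1.comp (Ar.id _)).tens (g2.comp (Ar.id _)))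
        refine Eqv.trans (Eqv.comp_id _) ?_
        refine Eqv.trans ((padL_eqv g2).congr_comp (padR_eqv g1)) ?_
        refine Eqv.trans (Eqv.tens_split_l g1 g2).symm ?_
        exact (Eqv.comp_id g1).symm.congr_tens (Eqv.comp_id g2).symm

theorem countS_comp [DecidableEq V] {A B C : Fm V} (x y : V) (n2 : NF V B C) (n1 : NF V A B) :
    countS x y (comp n2 n1).toAr = countS x y n2.toAr + countS x y n1.toAr := by
  cases n2 <;> cases n1 <;> simp [comp, toAr]

theorem countS_tens [DecidableEq V] {A B C D : Fm V} (x y : V) (n1 : NF V A B) (n2 : NF V C D) :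
    countS x y (tens n1 n2).toAr = countS x y n1.toAr + countS x y n2.toAr := by
  cases n1 <;> cases n2 <;> simp [tens, toAr, countS_padR, countS_padL] <;> omega

theorem rLess_toAr_comp {A B C : Fm V} {n2 : NF V B C} {n1 : NF V A B}
    (h2 : rLess n2.toAr) (h1 : rLess n1.toAr) : rLess (comp n2 n1).toAr := by
  cases n2 <;> cases n1 <;> simp_all [comp, toAr]

theorem rLess_toAr_tens {A B C D : Fm V} {n1 : NF V A B} {n2 : NF V C D}
    (h1 : rLess n1.toAr) (h2 : rLess n2.toAr) : rLess (tens n1 n2).toAr := by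
  cases n1 <;> cases n2 <;> simp_all [tens, toAr, rLess_padR, rLess_padL]

end NF

end Aux2

section Aux3

variable {V : Type}

local infix:50 " ≋ " => Eqv

/-- Marked formulae: `Mk V S C` marks the atoms of the real formula `C`:
atoms are unflipped, flipped, or suspended `r`-atoms; `S` is the corresponding
shadow formula (flipped atoms reversed, suspended atoms replaced by `⊤`). -/
inductive Mk (V : Type) : Fm V → Fm V → Type
  | top : Mk V .top .top
  | atF (x y : V) : Mk V (.rel x y) (.rel x y)
  | atT (x y : V) : Mk V (.rel y x) (.rel x y)
  | susp (x : V) : Mk V .top (.rel x x)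
  | and {S1 C1 S2 C2 : Fm V} : Mk V S1 C1 → Mk V S2 C2 → Mk V (S1.and S2) (C1.and C2)

namespace Mk

/-- The realizer of a marking, as a normal form: `s` on flipped atoms,
`r` on suspended atoms. -/
def realNF : ∀ {S C : Fm V}, Mk V S C → NF V S C
  | _, _, top => .idn _
  | _, _, atF _ _ => .idn _
  | _, _, atT x y => .hs (Ar.s y x) (.single (.prim (.s y x)))
  | _, _, susp x => .hs (Ar.r x) (.single (.prim (.r x)))
  | _, _, and m1 m2 => .tens (realNF m1) (realNF m2)

/-- Number of occurrences of `v` in normal (non-suspended) atoms. -/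
def cntV [DecidableEq V] (v : V) : ∀ {S C : Fm V}, Mk V S C → ℕ
  | _, _, top => 0
  | _, _, atF x y => (if x = v then 1 else 0) + (if y = v then 1 else 0)
  | _, _, atT x y => (if x = v then 1 else 0) + (if y = v then 1 else 0)
  | _, _, susp _ => 0
  | _, _, and m1 m2 => cntV v m1 + cntV v m2

/-- Number of normal atoms containing `v`. -/
def holdV [DecidableEq V] (v : V) : ∀ {S C : Fm V}, Mk V S C → ℕ
  | _, _, top => 0
  | _, _, atF x y => if x = v ∨ y = v then 1 else 0
  | _, _, atT x y => if x = v ∨ y = v then 1 else 0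
  | _, _, susp _ => 0
  | _, _, and m1 m2 => holdV v m1 + holdV v m2

/-- Number of flipped atoms with variable pair `{x, y}`. -/
def flpQ [DecidableEq V] (x y : V) : ∀ {S C : Fm V}, Mk V S C → ℕ
  | _, _, top => 0
  | _, _, atF _ _ => 0
  | _, _, atT a b => if (a = x ∧ b = y) ∨ (a = y ∧ b = x) then 1 else 0
  | _, _, susp _ => 0
  | _, _, and m1 m2 => flpQ x y m1 + flpQ x y m2

/-- Number of suspended atoms with variable `v`. -/
def suspV [DecidableEq V] (v : V) : ∀ {S C : Fm V}, Mk V S C → ℕ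
  | _, _, susp x => if x = v then 1 else 0
  | _, _, and m1 m2 => suspV v m1 + suspV v m2
  | _, _, _ => 0

/-- Total number of suspended atoms. -/
def suspT : ∀ {S C : Fm V}, Mk V S C → ℕ
  | _, _, susp _ => 1
  | _, _, and m1 m2 => suspT m1 + suspT m2
  | _, _, _ => 0

@[simp] theorem cntV_and [DecidableEq V] (v : V) {S1 C1 S2 C2 : Fm V}
    (m1 : Mk V S1 C1) (m2 : Mk V S2 C2) :
    cntV v (and m1 m2) = cntV v m1 + cntV v m2 := rfl
@[simp] theorem holdV_and [DecidableEq V] (v : V) {S1 C1 S2 C2 : Fm V}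
    (m1 : Mk V S1 C1) (m2 : Mk V S2 C2) :
    holdV v (and m1 m2) = holdV v m1 + holdV v m2 := rfl
@[simp] theorem flpQ_and [DecidableEq V] (x y : V) {S1 C1 S2 C2 : Fm V}
    (m1 : Mk V S1 C1) (m2 : Mk V S2 C2) :
    flpQ x y (and m1 m2) = flpQ x y m1 + flpQ x y m2 := rfl
@[simp] theorem suspV_and [DecidableEq V] (v : V) {S1 C1 S2 C2 : Fm V}
    (m1 : Mk V S1 C1) (m2 : Mk V S2 C2) :
    suspV v (and m1 m2) = suspV v m1 + suspV v m2 := rfl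
@[simp] theorem suspT_and {S1 C1 S2 C2 : Fm V}
    (m1 : Mk V S1 C1) (m2 : Mk V S2 C2) :
    suspT (and m1 m2) = suspT m1 + suspT m2 := rfl

theorem countF_eq [DecidableEq V] (v : V) : ∀ {S C : Fm V} (m : Mk V S C),
    countF v C = cntV v m + 2 * suspV v m := by
  intro S C m
  induction m with
  | top => rfl
  | atF x y => simp [countF, cntV, suspV]
  | atT x y => simp [countF, cntV, suspV]
  | susp x => simp [countF, cntV, suspV]; split_ifs <;> omega
  | and m1 m2 ih1 ih2 => simp [countF, ih1, ih2]; omega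

theorem hold_le_cnt [DecidableEq V] (v : V) {S C : Fm V} (m : Mk V S C) :
    holdV v m ≤ cntV v m := by
  induction m <;> simp [holdV, cntV] <;> (try split_ifs) <;> (try simp_all) <;> omega

theorem cnt_le_two_hold [DecidableEq V] (v : V) {S C : Fm V} (m : Mk V S C) :
    cntV v m ≤ 2 * holdV v m := by
  induction m <;> simp [holdV, cntV] <;> (try split_ifs) <;> (try simp_all) <;> omega

theorem flp_le_cntx [DecidableEq V] {x y : V} {S C : Fm V} (m : Mk V S C) :
    flpQ x y m ≤ cntV x m := by
  induction m <;> simp [flpQ, cntV] <;> (try split_ifs) <;> (try simp_all) <;> omega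

theorem flp_le_cnty [DecidableEq V] {x y : V} {S C : Fm V} (m : Mk V S C) :
    flpQ x y m ≤ cntV y m := by
  induction m <;> simp [flpQ, cntV] <;> (try split_ifs) <;> (try simp_all) <;> omega

theorem two_flp_le_cnt_diag [DecidableEq V] (x : V) {S C : Fm V} (m : Mk V S C) :
    2 * flpQ x x m ≤ cntV x m := by
  induction m <;> simp [flpQ, cntV] <;> (try split_ifs) <;> (try simp_all) <;> omega

theorem two_flp_le_cnt_sum [DecidableEq V] {x y : V} (hxy : x ≠ y) {S C : Fm V}
    (m : Mk V S C) : 2 * flpQ x y m ≤ cntV x m + cntV y m := by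
  induction m <;> simp [flpQ, cntV] <;> (try split_ifs) <;> (try simp_all) <;> omega

theorem countS_realNF [DecidableEq V] (x y : V) {S C : Fm V} (m : Mk V S C) :
    countS x y (realNF m).toAr = flpQ x y m := by
  induction m with
  | top => rfl
  | atF a b => rfl
  | atT a b =>
      show countS x y ((Ar.s b a).comp (.id _)) = _
      simp [flpQ]
      split_ifs with h1 h2 h2 <;> first | rfl | (exfalso; tauto)
  | susp a => rfl
  | and m1 m2 ih1 ih2 => simp [realNF, NF.countS_tens, ih1, ih2]

theorem rLess_realNF {S C : Fm V} (m : Mk V S C) (h : suspT m = 0) :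
    rLess (realNF m).toAr := by
  induction m with
  | top => trivial
  | atF a b => trivial
  | atT a b => show rLess ((Ar.s b a).comp (.id _)); simp
  | susp a => simp [suspT] at h
  | and m1 m2 ih1 ih2 =>
      simp [suspT] at h
      exact NF.rLess_toAr_tens (ih1 h.1) (ih2 h.2)

/-- The fully unmarked marking of a formula. -/
def ofFm : (A : Fm V) → Mk V A A
  | .rel x y => atF x y
  | .top => top
  | .and A B => and (ofFm A) (ofFm B)

theorem realNF_ofFm (A : Fm V) : realNF (ofFm A) = .idn A := by
  induction A with
  | rel x y => rfl
  | top => rfl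
  | and A B ihA ihB =>
      show NF.tens (realNF (ofFm A)) (realNF (ofFm B)) = _
      rw [ihA, ihB]; rfl

theorem cntV_ofFm [DecidableEq V] (v : V) (A : Fm V) :
    cntV v (ofFm A) = countF v A := by
  induction A <;> simp [ofFm, cntV, countF, *]

theorem suspT_ofFm (A : Fm V) : suspT (ofFm A) = 0 := by
  induction A <;> simp [ofFm, suspT, *]

end Mk

end Aux3

section Aux4

variable {V : Type} [DecidableEq V]

local infix:50 " ≋ " => Eqv

open Mk

/-- The invariants of one normalization run. -/
structure Good {A B S S' : Fm V} (f : Ar V A B) (m : Mk V S A) (m' : Mk V S' B)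
    (N : NF V S S') : Prop where
  eqv : Eqv (f.comp (realNF m).toAr) ((realNF m').toAr.comp N.toAr)
  nrl : rLess N.toAr
  rl : rLess f → suspT m = 0 → suspT m' = 0
  c1 : ∀ v, cntV v m' ≤ cntV v m
  c2 : ∀ v, holdV v m' ≤ holdV v m
  c3 : ∀ v, cntV v m' < cntV v m → 2 ≤ holdV v m
  cf : ∀ v, cntV v m = 2 → holdV v m = 1 → cntV v m' = 2 ∧ holdV v m' = 1
  ea : ∀ x y, 1 ≤ countS x y N.toAr →
        1 ≤ cntV x m ∧ 1 ≤ cntV y m ∧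
        (cntV x m' + 2 ≤ cntV x m ∨ cntV y m' + 2 ≤ cntV y m)
  eb : ∀ x y, x ≠ y → 2 ≤ countS x y N.toAr →
        3 ≤ cntV x m ∨ 3 ≤ cntV y m ∨
        (2 ≤ cntV x m ∧ 2 ≤ cntV y m ∧
          ((2 ≤ cntV x m' ∧ holdV x m' < cntV x m') ∨
           (2 ≤ cntV y m' ∧ holdV y m' < cntV y m')))
  ed : ∀ x, 1 ≤ countS x x N.toAr → 3 ≤ cntV x m

theorem Good.compo {A B C S S1 S' : Fm V} {f : Ar V A B} {g : Ar V B C}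
    {m : Mk V S A} {m1 : Mk V S1 B} {m' : Mk V S' C}
    {N1 : NF V S S1} {N2 : NF V S1 S'}
    (h1 : Good f m m1 N1) (h2 : Good g m1 m' N2) :
    Good (g.comp f) m m' (N2.comp N1) where
  eqv := by
    calc (g.comp f).comp (realNF m).toAr
        ≋ g.comp (f.comp (realNF m).toAr) := Eqv.comp_assoc ..
      _ ≋ g.comp ((realNF m1).toAr.comp N1.toAr) := Eqv.comp_r _ h1.eqv
      _ ≋ (g.comp (realNF m1).toAr).comp N1.toAr := (Eqv.comp_assoc ..).symm
      _ ≋ ((realNF m').toAr.comp N2.toAr).comp N1.toAr := Eqv.comp_l h2.eqv _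
      _ ≋ (realNF m').toAr.comp (N2.toAr.comp N1.toAr) := Eqv.comp_assoc ..
      _ ≋ (realNF m').toAr.comp (N2.comp N1).toAr := Eqv.comp_r _ (NF.comp_eqv ..).symm
  nrl := NF.rLess_toAr_comp h2.nrl h1.nrl
  rl := fun hf hm => by
    rw [rLess_comp_eq] at hf
    exact h2.rl hf.1 (h1.rl hf.2 hm)
  c1 := fun v => le_trans (h2.c1 v) (h1.c1 v)
  c2 := fun v => le_trans (h2.c2 v) (h1.c2 v)
  c3 := fun v hv => by
    rcases Nat.lt_or_ge (cntV v m1) (cntV v m) with h | h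
    · exact h1.c3 v h
    · have hh := h2.c3 v (by have := h1.c1 v; omega)
      have := h1.c2 v; omega
  cf := fun v h2c hh => by
    obtain ⟨a, b⟩ := h1.cf v h2c hh
    exact h2.cf v a b
  ea := fun x y hE => by
    rw [NF.countS_comp] at hE
    rcases Nat.lt_or_ge 0 (countS x y N1.toAr) with hN1 | hN1
    · obtain ⟨p, q, r⟩ := h1.ea x y hN1
      have c1x := h2.c1 x; have c1y := h2.c1 y
      exact ⟨p, q, by omega⟩
    · have hN2 : 1 ≤ countS x y N2.toAr := by omega
      obtain ⟨p, q, r⟩ := h2.ea x y hN2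
      have d1x := h1.c1 x; have d1y := h1.c1 y
      exact ⟨by omega, by omega, by omega⟩
  eb := fun x y hxy hE => by
    rw [NF.countS_comp] at hE
    have c1x := h1.c1 x; have c1y := h1.c1 y
    have d1x := h2.c1 x; have d1y := h2.c1 y
    rcases Nat.lt_or_ge 1 (countS x y N1.toAr) with hN1 | hN1
    · -- two emissions already in the prefix
      rcases h1.eb x y hxy hN1 with h | h | ⟨hx2, hy2, W⟩
      · left; exact h
      · right; left; exact h
      · rcases W with ⟨Wc, Wh⟩ | ⟨Wc, Wh⟩
        · rcases Nat.lt_or_ge (cntV x m1) 3 with hc | hc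
          · have hhold : holdV x m1 = 1 := by
              have := cnt_le_two_hold x m1; omega
            obtain ⟨a, b⟩ := h2.cf x (by omega) hhold
            exact Or.inr (Or.inr ⟨hx2, hy2, Or.inl ⟨by omega, by omega⟩⟩)
          · left; omega
        · rcases Nat.lt_or_ge (cntV y m1) 3 with hc | hc
          · have hhold : holdV y m1 = 1 := by
              have := cnt_le_two_hold y m1; omega
            obtain ⟨a, b⟩ := h2.cf y (by omega) hhold
            exact Or.inr (Or.inr ⟨hx2, hy2, Or.inr ⟨by omega, by omega⟩⟩)
          · right; left; omega
    · rcases Nat.lt_or_ge 0 (countS x y N1.toAr) with hN1' | hN1'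
      · -- one emission in each part
        have hE2 : 1 ≤ countS x y N2.toAr := by omega
        obtain ⟨p1, q1, r1⟩ := h1.ea x y hN1'
        obtain ⟨p2, q2, r2⟩ := h2.ea x y hE2
        rcases r1 with r1 | r1
        · left; omega
        · right; left; omega
      · -- both emissions in the suffix
        have hE2 : 2 ≤ countS x y N2.toAr := by omega
        rcases h2.eb x y hxy hE2 with h | h | ⟨hx2, hy2, W⟩
        · left; omega
        · right; left; omega
        · exact Or.inr (Or.inr ⟨by omega, by omega, W⟩)
  ed := fun x hE => by
    rw [NF.countS_comp] at hE
    rcases Nat.lt_or_ge 0 (countS x x N1.toAr) with hN1 | hN1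
    · exact h1.ed x hN1
    · have := h2.ed x (by omega)
      have := h1.c1 x; omega

theorem Good.tenso {A B C D SA SB SC SD : Fm V} {f : Ar V A B} {g : Ar V C D}
    {mA : Mk V SA A} {mB : Mk V SB B} {mC : Mk V SC C} {mD : Mk V SD D}
    {N1 : NF V SA SB} {N2 : NF V SC SD}
    (h1 : Good f mA mB N1) (h2 : Good g mC mD N2) :
    Good (f.tens g) (mA.and mC) (mB.and mD) (N1.tens N2) where
  eqv := by
    calc (f.tens g).comp (NF.tens (realNF mA) (realNF mC)).toAr
        ≋ (f.tens g).comp ((realNF mA).toAr.tens (realNF mC).toAr) :=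
          Eqv.comp_r _ (NF.tens_eqv ..)
      _ ≋ (f.comp (realNF mA).toAr).tens (g.comp (realNF mC).toAr) :=
          (Eqv.tens_comp ..).symm
      _ ≋ ((realNF mB).toAr.comp N1.toAr).tens ((realNF mD).toAr.comp N2.toAr) :=
          h1.eqv.congr_tens h2.eqv
      _ ≋ ((realNF mB).toAr.tens (realNF mD).toAr).comp (N1.toAr.tens N2.toAr) :=
          Eqv.tens_comp ..
      _ ≋ (NF.tens (realNF mB) (realNF mD)).toAr.comp (N1.tens N2).toAr :=
          Eqv.congr_comp (NF.tens_eqv ..).symm (NF.tens_eqv ..).symm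
  nrl := NF.rLess_toAr_tens h1.nrl h2.nrl
  rl := fun hf hm => by
    rw [rLess_tens_eq] at hf
    simp only [suspT_and] at hm ⊢
    have := h1.rl hf.1 (by omega)
    have := h2.rl hf.2 (by omega)
    omega
  c1 := fun v => by
    have := h1.c1 v; have := h2.c1 v
    simp only [cntV_and]; omega
  c2 := fun v => by
    have := h1.c2 v; have := h2.c2 v
    simp only [holdV_and]; omega
  c3 := fun v hv => by
    simp only [cntV_and] at hv
    simp only [holdV_and]
    have a1 := h1.c1 v; have a2 := h2.c1 v
    have b1 := hold_le_cnt v mA; have b2 := hold_le_cnt v mC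
    rcases Nat.lt_or_ge (cntV v mB) (cntV v mA) with h | h
    · have := h1.c3 v h; omega
    · have := h2.c3 v (by omega); omega
  cf := fun v hc hh => by
    simp only [cntV_and, holdV_and] at hc hh ⊢
    have q1 := cnt_le_two_hold v mA; have q2 := cnt_le_two_hold v mC
    have p1 := hold_le_cnt v mA; have p2 := hold_le_cnt v mC
    rcases Nat.lt_or_ge 0 (holdV v mA) with h | h
    · -- hold in left part, so cnt v mC = 0
      have hA : holdV v mA = 1 ∧ holdV v mC = 0 := by omega
      have hcA : cntV v mA = 2 := by omega
      obtain ⟨u1, u2⟩ := h1.cf v hcA hA.1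
      have := h2.c1 v
      have := h2.c2 v
      omega
    · have hC : holdV v mC = 1 := by omega
      have hcC : cntV v mC = 2 := by omega
      obtain ⟨u1, u2⟩ := h2.cf v hcC hC
      have := h1.c1 v
      have := h1.c2 v
      omega
  ea := fun x y hE => by
    rw [NF.countS_tens] at hE
    simp only [cntV_and]
    have a1x := h1.c1 x; have a1y := h1.c1 y
    have a2x := h2.c1 x; have a2y := h2.c1 y
    rcases Nat.lt_or_ge 0 (countS x y N1.toAr) with hN1 | hN1
    · obtain ⟨p, q, r⟩ := h1.ea x y hN1
      exact ⟨by omega, by omega, by omega⟩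
    · obtain ⟨p, q, r⟩ := h2.ea x y (by omega)
      exact ⟨by omega, by omega, by omega⟩
  eb := fun x y hxy hE => by
    rw [NF.countS_tens] at hE
    simp only [cntV_and, holdV_and]
    have a1x := h1.c1 x; have a1y := h1.c1 y
    have a2x := h2.c1 x; have a2y := h2.c1 y
    have hlB := hold_le_cnt x mB; have hlD := hold_le_cnt x mD
    have hlB' := hold_le_cnt y mB; have hlD' := hold_le_cnt y mD
    rcases Nat.lt_or_ge 1 (countS x y N1.toAr) with hN1 | hN1
    · rcases h1.eb x y hxy hN1 with h | h | ⟨hx2, hy2, W⟩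
      · left; omega
      · right; left; omega
      · refine Or.inr (Or.inr ⟨by omega, by omega, ?_⟩)
        rcases W with ⟨Wc, Wh⟩ | ⟨Wc, Wh⟩
        · exact Or.inl ⟨by omega, by omega⟩
        · exact Or.inr ⟨by omega, by omega⟩
    · rcases Nat.lt_or_ge 0 (countS x y N1.toAr) with hN1' | hN1'
      · obtain ⟨p1, q1, r1⟩ := h1.ea x y hN1'
        obtain ⟨p2, q2, r2⟩ := h2.ea x y (by omega)
        rcases r1 with r1 | r1
        · left; omega
        · right; left; omega
      · rcases Nat.lt_or_ge 1 (countS x y N2.toAr) with hN2 | hN2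
        · rcases h2.eb x y hxy hN2 with h | h | ⟨hx2, hy2, W⟩
          · left; omega
          · right; left; omega
          · refine Or.inr (Or.inr ⟨by omega, by omega, ?_⟩)
            rcases W with ⟨Wc, Wh⟩ | ⟨Wc, Wh⟩
            · exact Or.inl ⟨by omega, by omega⟩
            · exact Or.inr ⟨by omega, by omega⟩
        · omega
  ed := fun x hE => by
    rw [NF.countS_tens] at hE
    simp only [cntV_and]
    have a1 := h1.c1 x; have a2 := h2.c1 x
    rcases Nat.lt_or_ge 0 (countS x x N1.toAr) with hN1 | hN1
    · have := h1.ed x hN1; omega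
    · have := h2.ed x (by omega); omega

end Aux4

section Aux5

variable {V : Type} [DecidableEq V]

local infix:50 " ≋ " => Eqv

open Mk

/-- A `Good` certificate for steps that change no counts and emit no `s`. -/
theorem Good.ofSimple {A B S S' : Fm V} {f : Ar V A B} {m : Mk V S A} {m' : Mk V S' B}
    {N : NF V S S'}
    (heqv : Eqv (f.comp (realNF m).toAr) ((realNF m').toAr.comp N.toAr))
    (hnrl : rLess N.toAr)
    (hrl : rLess f → suspT m = 0 → suspT m' = 0)
    (hc : ∀ v, cntV v m' = cntV v m)
    (hh : ∀ v, holdV v m' = holdV v m)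
    (hE : ∀ x y, countS x y N.toAr = 0) : Good f m m' N where
  eqv := heqv
  nrl := hnrl
  rl := hrl
  c1 := fun v => le_of_eq (hc v)
  c2 := fun v => le_of_eq (hh v)
  c3 := fun v hv => absurd hv (by rw [hc v]; omega)
  cf := fun v h1 h2 => by rw [hc v, hh v]; exact ⟨h1, h2⟩
  ea := fun x y h => absurd h (by rw [hE x y]; omega)
  eb := fun x y _ h => absurd h (by rw [hE x y]; omega)
  ed := fun x h => absurd h (by rw [hE x x]; omega)

/-- Facts about markings of a single atom. -/
theorem Mk.atom_cnt {x y v : V} {S : Fm V} (m : Mk V S (.rel x y)) (h : suspT m = 0) :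
    cntV v m = (if x = v then 1 else 0) + (if y = v then 1 else 0) := by
  cases m with
  | atF => rfl
  | atT => rfl
  | susp => simp [suspT] at h

theorem Mk.atom_hold {x y v : V} {S : Fm V} (m : Mk V S (.rel x y)) (h : suspT m = 0) :
    holdV v m = (if x = v ∨ y = v then 1 else 0) := by
  cases m with
  | atF => rfl
  | atT => rfl
  | susp => simp [suspT] at h

theorem Mk.atom_flp {x y a b : V} {S : Fm V} (m : Mk V S (.rel x y)) :
    flpQ a b m ≤ (if (x = a ∧ y = b) ∨ (x = b ∧ y = a) then 1 else 0) := by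
  cases m with
  | atF => simp [flpQ]
  | atT => exact le_of_eq rfl
  | susp => simp [flpQ]

@[simp] theorem Mk.cntV_atF (v a b : V) :
    cntV v (Mk.atF (V := V) a b) = (if a = v then 1 else 0) + (if b = v then 1 else 0) := rfl
@[simp] theorem Mk.holdV_atF (v a b : V) :
    holdV v (Mk.atF (V := V) a b) = (if a = v ∨ b = v then 1 else 0) := rfl

/-- `t` with a suspended first atom: use (rtσ). -/
theorem Good.tsusp1 {y z : V} {S2 : Fm V} (m2 : Mk V S2 (.rel y z)) :
    Good (Ar.t y y z) ((Mk.susp y).and m2) m2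
      (NF.hs (Ar.sto S2) (.single (.prim (.sto S2)))) := by
  refine Good.ofSimple ?_ (by show rLess ((Ar.sto S2).comp (Ar.id (Fm.top.and S2))); simp) ?_ ?_ ?_ ?_
  · calc (Ar.t y y z).comp (realNF ((Mk.susp y).and m2)).toAr
        ≋ (Ar.t y y z).comp (((Ar.r y).comp (Ar.id _)).tens (realNF m2).toAr) :=
          Eqv.comp_r _ (NF.tens_eqv ..)
      _ ≋ (Ar.t y y z).comp ((Ar.r y).tens (realNF m2).toAr) :=
          Eqv.comp_r _ ((Eqv.comp_id _).congr_tens (Eqv.refl _))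
      _ ≋ (Ar.t y y z).comp (((Ar.r y).tens (Ar.id (.rel y z))).comp
            ((Ar.id .top).tens (realNF m2).toAr)) :=
          Eqv.comp_r _ (Eqv.tens_split_r _ _)
      _ ≋ ((Ar.t y y z).comp ((Ar.r y).tens (Ar.id (.rel y z)))).comp
            ((Ar.id .top).tens (realNF m2).toAr) := (Eqv.comp_assoc ..).symm
      _ ≋ (Ar.sto (.rel y z)).comp ((Ar.id .top).tens (realNF m2).toAr) :=
          Eqv.comp_l (Eqv.rts z y) _
      _ ≋ (realNF m2).toAr.comp (Ar.sto S2) := (Eqv.nat_s _).symm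
      _ ≋ (realNF m2).toAr.comp ((Ar.sto S2).comp (Ar.id _)) :=
          Eqv.comp_r _ (Eqv.comp_id _).symm
  · intro _ hm; simp [suspT] at hm
  · intro v; simp [cntV]
  · intro v; simp [holdV]
  · intro a b; show countS a b ((Ar.sto S2).comp (Ar.id (Fm.top.and S2))) = 0; simp

/-- `t` with a suspended second atom: use (rtδ). -/
theorem Good.tsusp2 {x y : V} {S1 : Fm V} (m1 : Mk V S1 (.rel x y)) :
    Good (Ar.t x y y) (m1.and (Mk.susp y)) m1
      (NF.hs (Ar.dto S1) (.single (.prim (.dto S1)))) := by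
  refine Good.ofSimple ?_ (by show rLess ((Ar.dto S1).comp (Ar.id (S1.and Fm.top))); simp) ?_ ?_ ?_ ?_
  · calc (Ar.t x y y).comp (realNF (m1.and (Mk.susp y))).toAr
        ≋ (Ar.t x y y).comp ((realNF m1).toAr.tens ((Ar.r y).comp (Ar.id _))) :=
          Eqv.comp_r _ (NF.tens_eqv ..)
      _ ≋ (Ar.t x y y).comp ((realNF m1).toAr.tens (Ar.r y)) :=
          Eqv.comp_r _ ((Eqv.refl _).congr_tens (Eqv.comp_id _))
      _ ≋ (Ar.t x y y).comp (((Ar.id (.rel x y)).tens (Ar.r y)).comp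
            ((realNF m1).toAr.tens (Ar.id .top))) :=
          Eqv.comp_r _ (Eqv.tens_split_l _ _)
      _ ≋ ((Ar.t x y y).comp ((Ar.id (.rel x y)).tens (Ar.r y))).comp
            ((realNF m1).toAr.tens (Ar.id .top)) := (Eqv.comp_assoc ..).symm
      _ ≋ (Ar.dto (.rel x y)).comp ((realNF m1).toAr.tens (Ar.id .top)) :=
          Eqv.comp_l (Eqv.rtd x y) _
      _ ≋ (realNF m1).toAr.comp (Ar.dto S1) := (Eqv.nat_d _).symm
      _ ≋ (realNF m1).toAr.comp ((Ar.dto S1).comp (Ar.id _)) :=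
          Eqv.comp_r _ (Eqv.comp_id _).symm
  · intro _ hm; simp [suspT] at hm
  · intro v; simp [cntV]
  · intro v; simp [holdV]
  · intro a b; show countS a b ((Ar.dto S1).comp (Ar.id (S1.and Fm.top))) = 0; simp

end Aux5

section Aux6

variable {V : Type} [DecidableEq V]

local infix:50 " ≋ " => Eqv

open Mk

/-- `t` acting on two normal atoms: the emission step. -/
theorem Good.tcase {x y z : V} {S1 S2 : Fm V}
    (m1 : Mk V S1 (.rel x y)) (m2 : Mk V S2 (.rel y z))
    (h1 : suspT m1 = 0) (h2 : suspT m2 = 0) :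
    Good (Ar.t x y z) (m1.and m2) (Mk.atF x z)
      (NF.comp (NF.hs (Ar.t x y z) (.single (.prim (.t x y z))))
        (NF.tens (realNF m1) (realNF m2))) := by
  have hEval : ∀ a b, countS a b (NF.comp (NF.hs (Ar.t x y z) (.single (.prim (.t x y z))))
      (NF.tens (realNF m1) (realNF m2))).toAr = flpQ a b m1 + flpQ a b m2 := by
    intro a b
    rw [NF.countS_comp, NF.countS_tens, countS_realNF, countS_realNF]
    show countS a b ((Ar.t x y z).comp (Ar.id _)) + _ = _
    simp
  refine { eqv := ?_, nrl := ?_, rl := fun _ _ => rfl, c1 := ?_, c2 := ?_, c3 := ?_,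
           cf := ?_, ea := ?_, eb := ?_, ed := ?_ }
  · refine Eqv.symm (Eqv.trans (Eqv.id_comp _) (Eqv.trans (NF.comp_eqv ..) ?_))
    exact Eqv.comp_l (Eqv.comp_id _) _
  · exact NF.rLess_toAr_comp
      (by show rLess ((Ar.t x y z).comp (Ar.id _)); simp)
      (NF.rLess_toAr_tens (rLess_realNF m1 h1) (rLess_realNF m2 h2))
  · intro v
    simp only [cntV_and, Mk.atom_cnt m1 h1, Mk.atom_cnt m2 h2]
    show (if x = v then 1 else 0) + (if z = v then 1 else 0) ≤ _
    split_ifs <;> omega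
  · intro v
    simp only [holdV_and, Mk.atom_hold m1 h1, Mk.atom_hold m2 h2]
    show (if x = v ∨ z = v then 1 else 0) ≤ _
    split_ifs <;> (try simp_all) <;> omega
  · intro v hv
    simp only [cntV_and, Mk.atom_cnt m1 h1, Mk.atom_cnt m2 h2] at hv
    rw [show cntV v (Mk.atF x z) = (if x = v then 1 else 0) + (if z = v then 1 else 0) from rfl]
      at hv
    simp only [holdV_and, Mk.atom_hold m1 h1, Mk.atom_hold m2 h2]
    split_ifs at hv ⊢ <;> (try simp_all) <;> omega
  · intro v hc hh
    exfalso
    simp only [cntV_and, Mk.atom_cnt m1 h1, Mk.atom_cnt m2 h2] at hc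
    simp only [holdV_and, Mk.atom_hold m1 h1, Mk.atom_hold m2 h2] at hh
    split_ifs at hc hh <;> (try simp_all) <;> omega
  · -- ea
    intro a b hE
    rw [hEval] at hE
    have f1 := Mk.atom_flp (a := a) (b := b) m1
    have f2 := Mk.atom_flp (a := a) (b := b) m2
    rcases Nat.lt_or_ge 0 (flpQ a b m1) with hf | hf
    · have hp : (x = a ∧ y = b) ∨ (x = b ∧ y = a) := by
        by_contra hq; rw [if_neg hq] at f1; omega
      clear f1 f2 hE
      rcases hp with ⟨rfl, rfl⟩ | ⟨rfl, rfl⟩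
      · refine ⟨?_, ?_, Or.inr ?_⟩ <;>
          (simp only [cntV_and, Mk.atom_cnt m1 h1, Mk.atom_cnt m2 h2]
           first
            | show 1 ≤ _
            | rw [show ∀ w, cntV w (Mk.atF x z) =
                (if x = w then 1 else 0) + (if z = w then 1 else 0) from fun _ => rfl]) <;>
          (split_ifs <;> (try simp_all) <;> omega)
      · refine ⟨?_, ?_, Or.inl ?_⟩ <;>
          (simp only [cntV_and, Mk.atom_cnt m1 h1, Mk.atom_cnt m2 h2]
           first
            | show 1 ≤ _
            | rw [show ∀ w, cntV w (Mk.atF x z) =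
                (if x = w then 1 else 0) + (if z = w then 1 else 0) from fun _ => rfl]) <;>
          (split_ifs <;> (try simp_all) <;> omega)
    · have hf2 : 1 ≤ flpQ a b m2 := by omega
      have hp : (y = a ∧ z = b) ∨ (y = b ∧ z = a) := by
        by_contra hq; rw [if_neg hq] at f2; omega
      clear f1 f2 hE
      rcases hp with ⟨rfl, rfl⟩ | ⟨rfl, rfl⟩
      · refine ⟨?_, ?_, Or.inl ?_⟩ <;>
          (simp only [cntV_and, Mk.atom_cnt m1 h1, Mk.atom_cnt m2 h2]
           first
            | show 1 ≤ _
            | rw [show ∀ w, cntV w (Mk.atF x z) =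
                (if x = w then 1 else 0) + (if z = w then 1 else 0) from fun _ => rfl]) <;>
          (split_ifs <;> (try simp_all) <;> omega)
      · refine ⟨?_, ?_, Or.inr ?_⟩ <;>
          (simp only [cntV_and, Mk.atom_cnt m1 h1, Mk.atom_cnt m2 h2]
           first
            | show 1 ≤ _
            | rw [show ∀ w, cntV w (Mk.atF x z) =
                (if x = w then 1 else 0) + (if z = w then 1 else 0) from fun _ => rfl]) <;>
          (split_ifs <;> (try simp_all) <;> omega)
  · -- eb
    intro a b hab hE
    rw [hEval] at hE
    have f1 := Mk.atom_flp (a := a) (b := b) m1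
    have f2 := Mk.atom_flp (a := a) (b := b) m2
    have hp1 : (x = a ∧ y = b) ∨ (x = b ∧ y = a) := by
      by_contra hq; rw [if_neg hq] at f1; split_ifs at f2 <;> omega
    have hp2 : (y = a ∧ z = b) ∨ (y = b ∧ z = a) := by
      by_contra hq; rw [if_neg hq] at f2; split_ifs at f1 <;> omega
    clear f1 f2 hE
    rcases hp1 with ⟨rfl, rfl⟩ | ⟨rfl, rfl⟩ <;> rcases hp2 with ⟨h3, h4⟩ | ⟨h3, h4⟩ <;>
      first
        | exact absurd h3.symm hab
        | exact absurd h3 hab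
        | (subst h4
           first
            | (refine Or.inr (Or.inr ⟨?_, ?_, Or.inl ⟨?_, ?_⟩⟩) <;>
                (simp only [cntV_and, holdV_and, Mk.atom_cnt m1 h1, Mk.atom_cnt m2 h2,
                  Mk.atom_hold m1 h1, Mk.atom_hold m2 h2, Mk.cntV_atF, Mk.holdV_atF] <;>
                  split_ifs <;> (try simp_all) <;> omega))
            | (refine Or.inr (Or.inr ⟨?_, ?_, Or.inr ⟨?_, ?_⟩⟩) <;>
                (simp only [cntV_and, holdV_and, Mk.atom_cnt m1 h1, Mk.atom_cnt m2 h2,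
                  Mk.atom_hold m1 h1, Mk.atom_hold m2 h2, Mk.cntV_atF, Mk.holdV_atF] <;>
                  split_ifs <;> (try simp_all) <;> omega)))
  · -- ed
    intro a hE
    rw [hEval] at hE
    have f1 := Mk.atom_flp (a := a) (b := a) m1
    have f2 := Mk.atom_flp (a := a) (b := a) m2
    rcases Nat.lt_or_ge 0 (flpQ a a m1) with hf | hf
    · have hp : x = a ∧ y = a := by
        by_contra hq
        rw [if_neg (by tauto)] at f1; omega
      obtain ⟨rfl, rfl⟩ := hp
      simp only [cntV_and, Mk.atom_cnt m1 h1, Mk.atom_cnt m2 h2]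
      split_ifs <;> (try simp_all) <;> omega
    · have hp : y = a ∧ z = a := by
        by_contra hq
        rw [if_neg (by tauto)] at f2; omega
      obtain ⟨rfl, rfl⟩ := hp
      simp only [cntV_and, Mk.atom_cnt m1 h1, Mk.atom_cnt m2 h2]
      split_ifs <;> (try simp_all) <;> omega

end Aux6

section Aux7

variable {V : Type} [DecidableEq V]

local infix:50 " ≋ " => Eqv

open Mk

theorem runGood {A B : Fm V} (f : Ar V A B) : ∀ {S : Fm V} (m : Mk V S A),
    ∃ (S' : Fm V) (m' : Mk V S' B) (N : NF V S S'), Good f m m' N := by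
  induction f with
  | id A =>
      intro S m
      refine ⟨S, m, .idn S, Good.ofSimple ?_ trivial (fun _ h => h)
        (fun _ => rfl) (fun _ => rfl) (fun _ _ => rfl)⟩
      exact (Eqv.id_comp _).trans (Eqv.comp_id _).symm
  | comp g f ihg ihf =>
      intro S m
      obtain ⟨S1, m1, N1, h1⟩ := ihf m
      obtain ⟨S', m', N2, h2⟩ := ihg m1
      exact ⟨S', m', N2.comp N1, h1.compo h2⟩
  | tens f g ihf ihg =>
      intro S m
      cases m with | and m1 m2 =>
      obtain ⟨SB, mB, N1, hf⟩ := ihf m1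
      obtain ⟨SD, mD, N2, hg⟩ := ihg m2
      exact ⟨_, mB.and mD, N1.tens N2, hf.tenso hg⟩
  | bto A B C =>
      intro S m
      cases m with | and mA m23 =>
      cases m23 with | and mB mC =>
      refine ⟨_, (mA.and mB).and mC, .hs (Ar.bto _ _ _) (.single (.prim (.bto _ _ _))),
        Good.ofSimple ?_ ?_ ?_ ?_ ?_ ?_⟩
      · calc (Ar.bto A B C).comp (realNF (mA.and (mB.and mC))).toAr
            ≋ (Ar.bto A B C).comp ((realNF mA).toAr.tens (NF.tens (realNF mB) (realNF mC)).toAr) :=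
              Eqv.comp_r _ (NF.tens_eqv ..)
          _ ≋ (Ar.bto A B C).comp
                ((realNF mA).toAr.tens ((realNF mB).toAr.tens (realNF mC).toAr)) :=
              Eqv.comp_r _ ((Eqv.refl _).congr_tens (NF.tens_eqv ..))
          _ ≋ (((realNF mA).toAr.tens (realNF mB).toAr).tens (realNF mC).toAr).comp
                (Ar.bto _ _ _) := (Eqv.nat_b ..).symm
          _ ≋ ((NF.tens (realNF mA) (realNF mB)).toAr.tens (realNF mC).toAr).comp
                (Ar.bto _ _ _) := Eqv.comp_l ((NF.tens_eqv ..).symm.congr_tens (Eqv.refl _)) _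
          _ ≋ (NF.tens (NF.tens (realNF mA) (realNF mB)) (realNF mC)).toAr.comp
                (Ar.bto _ _ _) := Eqv.comp_l (NF.tens_eqv ..).symm _
          _ ≋ (NF.tens (NF.tens (realNF mA) (realNF mB)) (realNF mC)).toAr.comp
                ((Ar.bto _ _ _).comp (Ar.id _)) := Eqv.comp_r _ (Eqv.comp_id _).symm
      · show rLess ((Ar.bto _ _ _).comp (Ar.id _)); simp
      · intro _ h; simp only [suspT_and] at h ⊢; omega
      · intro v; simp only [cntV_and]; omega
      · intro v; simp only [holdV_and]; omega
      · intro a b; show countS a b ((Ar.bto _ _ _).comp (Ar.id _)) = 0; simp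
  | bfrom A B C =>
      intro S m
      cases m with | and mAB mC =>
      cases mAB with | and mA mB =>
      refine ⟨_, mA.and (mB.and mC), .hs (Ar.bfrom _ _ _) (.single (.prim (.bfrom _ _ _))),
        Good.ofSimple ?_ ?_ ?_ ?_ ?_ ?_⟩
      · calc (Ar.bfrom A B C).comp (realNF ((mA.and mB).and mC)).toAr
            ≋ (Ar.bfrom A B C).comp ((NF.tens (realNF mA) (realNF mB)).toAr.tens (realNF mC).toAr) :=
              Eqv.comp_r _ (NF.tens_eqv ..)
          _ ≋ (Ar.bfrom A B C).comp
                (((realNF mA).toAr.tens (realNF mB).toAr).tens (realNF mC).toAr) :=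
              Eqv.comp_r _ ((NF.tens_eqv ..).congr_tens (Eqv.refl _))
          _ ≋ ((realNF mA).toAr.tens ((realNF mB).toAr.tens (realNF mC).toAr)).comp
                (Ar.bfrom _ _ _) := Eqv.nat_b' ..
          _ ≋ ((realNF mA).toAr.tens (NF.tens (realNF mB) (realNF mC)).toAr).comp
                (Ar.bfrom _ _ _) := Eqv.comp_l ((Eqv.refl _).congr_tens (NF.tens_eqv ..).symm) _
          _ ≋ (NF.tens (realNF mA) (NF.tens (realNF mB) (realNF mC))).toAr.comp
                (Ar.bfrom _ _ _) := Eqv.comp_l (NF.tens_eqv ..).symm _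
          _ ≋ (NF.tens (realNF mA) (NF.tens (realNF mB) (realNF mC))).toAr.comp
                ((Ar.bfrom _ _ _).comp (Ar.id _)) := Eqv.comp_r _ (Eqv.comp_id _).symm
      · show rLess ((Ar.bfrom _ _ _).comp (Ar.id _)); simp
      · intro _ h; simp only [suspT_and] at h ⊢; omega
      · intro v; simp only [cntV_and]; omega
      · intro v; simp only [holdV_and]; omega
      · intro a b; show countS a b ((Ar.bfrom _ _ _).comp (Ar.id _)) = 0; simp
  | dto A =>
      intro S m
      cases m with | and mA mT =>
      cases mT with | top =>
      refine ⟨_, mA, .hs (Ar.dto _) (.single (.prim (.dto _))),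
        Good.ofSimple ?_ ?_ ?_ ?_ ?_ ?_⟩
      · calc (Ar.dto A).comp (realNF (mA.and Mk.top)).toAr
            ≋ (Ar.dto A).comp ((realNF mA).toAr.tens (Ar.id .top)) :=
              Eqv.comp_r _ (NF.tens_eqv ..)
          _ ≋ (realNF mA).toAr.comp (Ar.dto _) := (Eqv.nat_d _).symm
          _ ≋ (realNF mA).toAr.comp ((Ar.dto _).comp (Ar.id _)) :=
              Eqv.comp_r _ (Eqv.comp_id _).symm
      · show rLess ((Ar.dto _).comp (Ar.id _)); simp
      · intro _ h; simp only [suspT_and] at h ⊢; omega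
      · intro v; simp [cntV]
      · intro v; simp [holdV]
      · intro a b; show countS a b ((Ar.dto _).comp (Ar.id _)) = 0; simp
  | dfrom A =>
      intro S m
      refine ⟨_, m.and Mk.top, .hs (Ar.dfrom _) (.single (.prim (.dfrom _))),
        Good.ofSimple ?_ ?_ ?_ ?_ ?_ ?_⟩
      · calc (Ar.dfrom A).comp (realNF m).toAr
            ≋ ((realNF m).toAr.tens (Ar.id .top)).comp (Ar.dfrom _) := Eqv.nat_d' _
          _ ≋ (NF.tens (realNF m) (NF.idn .top)).toAr.comp (Ar.dfrom _) :=
              Eqv.comp_l (NF.tens_eqv (realNF m) (NF.idn .top)).symm _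
          _ ≋ (NF.tens (realNF m) (NF.idn .top)).toAr.comp ((Ar.dfrom _).comp (Ar.id _)) :=
              Eqv.comp_r _ (Eqv.comp_id _).symm
      · show rLess ((Ar.dfrom _).comp (Ar.id _)); simp
      · intro _ h; simp only [suspT_and] at h ⊢; simp [suspT]; omega
      · intro v; simp [cntV]
      · intro v; simp [holdV]
      · intro a b; show countS a b ((Ar.dfrom _).comp (Ar.id _)) = 0; simp
  | sto A =>
      intro S m
      cases m with | and mT mA =>
      cases mT with | top =>
      refine ⟨_, mA, .hs (Ar.sto _) (.single (.prim (.sto _))),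
        Good.ofSimple ?_ ?_ ?_ ?_ ?_ ?_⟩
      · calc (Ar.sto A).comp (realNF (Mk.top.and mA)).toAr
            ≋ (Ar.sto A).comp ((Ar.id .top).tens (realNF mA).toAr) :=
              Eqv.comp_r _ (NF.tens_eqv ..)
          _ ≋ (realNF mA).toAr.comp (Ar.sto _) := (Eqv.nat_s _).symm
          _ ≋ (realNF mA).toAr.comp ((Ar.sto _).comp (Ar.id _)) :=
              Eqv.comp_r _ (Eqv.comp_id _).symm
      · show rLess ((Ar.sto _).comp (Ar.id _)); simp
      · intro _ h; simp only [suspT_and] at h ⊢; omega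
      · intro v; simp [cntV]
      · intro v; simp [holdV]
      · intro a b; show countS a b ((Ar.sto _).comp (Ar.id _)) = 0; simp
  | sfrom A =>
      intro S m
      refine ⟨_, Mk.top.and m, .hs (Ar.sfrom _) (.single (.prim (.sfrom _))),
        Good.ofSimple ?_ ?_ ?_ ?_ ?_ ?_⟩
      · calc (Ar.sfrom A).comp (realNF m).toAr
            ≋ ((Ar.id .top).tens (realNF m).toAr).comp (Ar.sfrom _) := Eqv.nat_s' _
          _ ≋ (NF.tens (NF.idn .top) (realNF m)).toAr.comp (Ar.sfrom _) :=
              Eqv.comp_l (NF.tens_eqv (NF.idn .top) (realNF m)).symm _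
          _ ≋ (NF.tens (NF.idn .top) (realNF m)).toAr.comp ((Ar.sfrom _).comp (Ar.id _)) :=
              Eqv.comp_r _ (Eqv.comp_id _).symm
      · show rLess ((Ar.sfrom _).comp (Ar.id _)); simp
      · intro _ h; simp only [suspT_and] at h ⊢; simp [suspT]; omega
      · intro v; simp [cntV]
      · intro v; simp [holdV]
      · intro a b; show countS a b ((Ar.sfrom _).comp (Ar.id _)) = 0; simp
  | r x =>
      intro S m
      cases m with | top =>
      refine ⟨_, Mk.susp x, .idn .top, Good.ofSimple ?_ trivial ?_ ?_ ?_ ?_⟩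
      · show Eqv ((Ar.r x).comp (Ar.id .top)) (((Ar.r x).comp (Ar.id .top)).comp (Ar.id .top))
        exact (Eqv.comp_id _).symm
      · intro hf _; exact absurd hf (by simp)
      · intro v; rfl
      · intro v; rfl
      · intro a b; rfl
  | t x y z =>
      intro S m
      cases m with | and m1 m2 =>
      cases m1 with
      | susp => exact ⟨_, m2, _, Good.tsusp1 m2⟩
      | atF =>
        cases m2 with
        | susp => exact ⟨_, _, _, Good.tsusp2 (Mk.atF x y)⟩
        | atF => exact ⟨_, _, _, Good.tcase (Mk.atF x y) (Mk.atF y z) rfl rfl⟩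
        | atT => exact ⟨_, _, _, Good.tcase (Mk.atF x y) (Mk.atT y z) rfl rfl⟩
      | atT =>
        cases m2 with
        | susp => exact ⟨_, _, _, Good.tsusp2 (Mk.atT x y)⟩
        | atF => exact ⟨_, _, _, Good.tcase (Mk.atT x y) (Mk.atF y z) rfl rfl⟩
        | atT => exact ⟨_, _, _, Good.tcase (Mk.atT x y) (Mk.atT y z) rfl rfl⟩
  | s x y =>
      intro S m
      cases m with
      | atF =>
          refine ⟨_, Mk.atT y x, .idn _, Good.ofSimple ?_ trivial (fun _ h => h) ?_ ?_ ?_⟩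
          · show Eqv ((Ar.s x y).comp (Ar.id _))
              (((Ar.s x y).comp (Ar.id _)).comp (Ar.id _))
            exact (Eqv.comp_id _).symm
          · intro v; simp [cntV]; omega
          · intro v; simp [holdV]
            split_ifs <;> (try simp_all) <;> omega
          · intro a b; rfl
      | atT =>
          refine ⟨_, Mk.atF y x, .idn _, Good.ofSimple ?_ trivial (fun _ h => h) ?_ ?_ ?_⟩
          · show Eqv ((Ar.s x y).comp ((Ar.s y x).comp (Ar.id _)))
              ((Ar.id _).comp (Ar.id _))
            calc (Ar.s x y).comp ((Ar.s y x).comp (Ar.id _))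
                ≋ (Ar.s x y).comp (Ar.s y x) := Eqv.comp_r _ (Eqv.comp_id _)
              _ ≋ Ar.id _ := Eqv.sseq y x
              _ ≋ (Ar.id _).comp (Ar.id _) := (Eqv.comp_id _).symm
          · intro v; simp [cntV]; omega
          · intro v; simp [holdV]
            split_ifs <;> (try simp_all) <;> omega
          · intro a b; rfl
      | susp =>
          refine ⟨_, Mk.susp x, .idn _, Good.ofSimple ?_ trivial (fun _ h => h) ?_ ?_ ?_⟩
          · show Eqv ((Ar.s x x).comp ((Ar.r x).comp (Ar.id _)))
              (((Ar.r x).comp (Ar.id _)).comp (Ar.id _))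
            calc (Ar.s x x).comp ((Ar.r x).comp (Ar.id _))
                ≋ (Ar.s x x).comp (Ar.r x) := Eqv.comp_r _ (Eqv.comp_id _)
              _ ≋ Ar.r x := Eqv.rs x
              _ ≋ (Ar.r x).comp (Ar.id _) := (Eqv.comp_id _).symm
              _ ≋ ((Ar.r x).comp (Ar.id _)).comp (Ar.id _) := (Eqv.comp_id _).symm
          · intro v; rfl
          · intro v; rfl
          · intro a b; rfl

end Aux7

/-- s-Normality Lemma. -/
theorem stmt12 {V : Type} [DecidableEq V] {A B : Fm V} (f : Ar V A B)
    (hd : Diversified A B) :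
    ∃ f' : Ar V A B, Developed f' ∧ sNormal f' ∧ Eqv f f' ∧ (rLess f → rLess f') := by
  obtain ⟨S', m', N, hg⟩ := runGood f (Mk.ofFm A)
  refine ⟨(NF.comp (Mk.realNF m') N).toAr, NF.developed_toAr _, ?_, ?_, ?_⟩
  · -- s-normality
    intro x y
    rw [NF.countS_comp, Mk.countS_realNF]
    by_contra hcon
    push_neg at hcon
    have cA : ∀ v, Mk.cntV v m' ≤ countF v A := fun v => by
      have := hg.c1 v; rwa [Mk.cntV_ofFm] at this
    have cB : ∀ v, Mk.cntV v m' + 2 * Mk.suspV v m' = countF v B :=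
      fun v => (Mk.countF_eq v m').symm
    have hdx := hd x
    have hdy := hd y
    have cAx := cA x; have cAy := cA y
    have cBx := cB x; have cBy := cB y
    rcases eq_or_ne x y with rfl | hxy
    · have t1 := Mk.two_flp_le_cnt_diag x m'
      have t2 : countS x x N.toAr = 0 := by
        by_contra h2
        have h3 := hg.ed x (by omega)
        rw [Mk.cntV_ofFm] at h3
        omega
      omega
    · have f_x := Mk.flp_le_cntx (x := x) (y := y) m'
      have f_y := Mk.flp_le_cnty (x := x) (y := y) m'
      rcases Nat.lt_or_ge 1 (countS x y N.toAr) with hE | hE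
      · rcases hg.eb x y hxy hE with h | h | ⟨hx2, hy2, W⟩
        · rw [Mk.cntV_ofFm] at h; omega
        · rw [Mk.cntV_ofFm] at h; omega
        · rw [Mk.cntV_ofFm] at hx2 hy2
          rcases W with ⟨Wc, _⟩ | ⟨Wc, _⟩ <;> omega
      · rcases Nat.lt_or_ge 0 (countS x y N.toAr) with hE' | hE'
        · obtain ⟨_, _, D⟩ := hg.ea x y (by omega)
          rw [Mk.cntV_ofFm, Mk.cntV_ofFm] at D
          rcases D with D | D <;> omega
        · omega
  · -- Eqv
    have he := hg.eqv
    rw [Mk.realNF_ofFm] at he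
    exact ((Eqv.comp_id f).symm.trans he).trans (NF.comp_eqv ..).symm
  · -- r-lessness
    intro hr
    have hm : Mk.suspT m' = 0 := hg.rl hr (Mk.suspT_ofFm A)
    exact NF.rLess_toAr_comp (Mk.rLess_realNF m' hm) hg.nrl

end DP
end

section
/- Auxiliary Lemma: if f and g are developed, r-less, δ-σ-less, diversified and s-normal arrow terms of M≡ of the same type A ⊢ B, then f = g in M≡. -/
/-! Formalization of categories of proofs for linear equality (Dosen-Petric),
with the generality functor G into the category Br of Brauerian diagrams,
represented here by the matching relation on occurrences of variables. -/

namespace DP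

/-- An arrow term is δ-σ-less when none of δ→, δ←, σ→, σ← occurs in it. -/
def dsLess {V : Type} : ∀ {A B : Fm V}, Ar V A B → Prop
  | _, _, .dto _ => False
  | _, _, .dfrom _ => False
  | _, _, .sto _ => False
  | _, _, .sfrom _ => False
  | _, _, .comp g f => dsLess g ∧ dsLess f
  | _, _, .tens f g => dsLess f ∧ dsLess g
  | _, _, _ => True

/-- `topFree A` holds when ⊤ does not occur in A. -/
def topFree {V : Type} : Fm V → Prop
  | .rel _ _ => True
  | .top => False
  | .and A B => topFree A ∧ topFree B

/-! Read arrow terms as morphisms of the monoidal category `M≡` (composition written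
`f ≫ g = g ∘ f`). An r-less, δ-σ-less arrow `A ⊢ B` factors as `ρ ≫ n`, with `ρ` built from
associativity isomorphisms alone and `n` a normal form: a tensor product, shaped like `B`, of
trees of `t` over `1` and `s`, each `t` possibly followed by `s`.

In a diversified type every variable occurs at most twice, so the leaves of such a tree form a
chain joining the two ends of its target atom. A cut of the chain that separates the ends and is
crossed by a single variable can be made the root of the tree by rotations using `(tb)`; hence
two normal forms with the same leaves agree up to reassociation of the source. The blocks of
leaves above the components of `B` are forced as well: every variable occurs an even number of
times in source and target together, so a misplaced block would contain each of its variables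
twice and be cut off from the rest. Finally, any two associativity arrows with the same source
and target are equal by Mac Lane's coherence theorem. -/

open CategoryTheory MonoidalCategory

variable {V : Type}

section Category

instance Ar.setoid (A B : Fm V) : Setoid (Ar V A B) :=
  ⟨Eqv, ⟨Eqv.refl, Eqv.symm, Eqv.trans⟩⟩

instance : Category (Fm V) where
  Hom A B := Quotient (Ar.setoid A B)
  id A := ⟦Ar.id A⟧
  comp := Quotient.map₂ (fun f g => g.comp f) fun _ _ hf _ _ hg => hg.congr_comp hf
  id_comp := by rintro _ _ ⟨f⟩; exact Quotient.sound (Eqv.comp_id f)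
  comp_id := by rintro _ _ ⟨f⟩; exact Quotient.sound (Eqv.id_comp f)
  assoc := by rintro _ _ _ _ ⟨f⟩ ⟨g⟩ ⟨h⟩; exact Quotient.sound (Eqv.comp_assoc h g f).symm

def Ar.hom {A B : Fm V} (f : Ar V A B) : A ⟶ B := ⟦f⟧

def tensHom {A B C D : Fm V} : (A ⟶ B) → (C ⟶ D) → (A.and C ⟶ B.and D) :=
  Quotient.map₂ Ar.tens fun _ _ hf _ _ hg => hf.congr_tens hg

instance : MonoidalCategoryStruct (Fm V) where
  tensorObj := Fm.and
  tensorUnit := Fm.top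
  tensorHom := tensHom
  whiskerLeft A _ _ f := tensHom (𝟙 A) f
  whiskerRight f B := tensHom f (𝟙 B)
  associator A B C := ⟨(Ar.bfrom A B C).hom, (Ar.bto A B C).hom,
    Quotient.sound (Eqv.bb2 A B C), Quotient.sound (Eqv.bb1 A B C)⟩
  leftUnitor A := ⟨(Ar.sto A).hom, (Ar.sfrom A).hom,
    Quotient.sound (Eqv.ss1 A), Quotient.sound (Eqv.ss2 A)⟩
  rightUnitor A := ⟨(Ar.dto A).hom, (Ar.dfrom A).hom,
    Quotient.sound (Eqv.dd1 A), Quotient.sound (Eqv.dd2 A)⟩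

namespace Ar

@[simp] theorem hom_id (A : Fm V) : (Ar.id A).hom = 𝟙 A := rfl

@[simp] theorem hom_comp {A B C : Fm V} (g : Ar V B C) (f : Ar V A B) :
    (g.comp f).hom = f.hom ≫ g.hom := rfl

@[simp] theorem hom_tens {A B C D : Fm V} (f : Ar V A B) (g : Ar V C D) :
    (f.tens g).hom = f.hom ⊗ₘ g.hom := rfl

@[simp] theorem hom_bfrom (A B C : Fm V) : (Ar.bfrom A B C).hom = (α_ A B C).hom := rfl

@[simp] theorem hom_bto (A B C : Fm V) : (Ar.bto A B C).hom = (α_ A B C).inv := rfl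

theorem hom_eq_hom_iff {A B : Fm V} {f g : Ar V A B} : f.hom = g.hom ↔ Eqv f g := Quotient.eq

theorem hom_surjective {A B : Fm V} : Function.Surjective (hom : Ar V A B → (A ⟶ B)) :=
  Quotient.mk_surjective

end Ar

theorem tensHom_comp_tensHom {A₁ B₁ C₁ A₂ B₂ C₂ : Fm V} (f₁ : A₁ ⟶ B₁) (f₂ : A₂ ⟶ B₂)
    (g₁ : B₁ ⟶ C₁) (g₂ : B₂ ⟶ C₂) : (f₁ ⊗ₘ f₂) ≫ (g₁ ⊗ₘ g₂) = (f₁ ≫ g₁) ⊗ₘ (f₂ ≫ g₂) := by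
  obtain ⟨f₁, rfl⟩ := Ar.hom_surjective f₁
  obtain ⟨f₂, rfl⟩ := Ar.hom_surjective f₂
  obtain ⟨g₁, rfl⟩ := Ar.hom_surjective g₁
  obtain ⟨g₂, rfl⟩ := Ar.hom_surjective g₂
  exact Quotient.sound (Eqv.tens_comp g₁ f₁ g₂ f₂).symm

theorem id_tensHom_id (A B : Fm V) : (𝟙 A ⊗ₘ 𝟙 B : A ⊗ B ⟶ A ⊗ B) = 𝟙 (A ⊗ B) :=
  Quotient.sound (Eqv.tens_id A B)

instance : MonoidalCategory (Fm V) :=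
  .ofTensorHom
    (id_tensorHom_id := id_tensHom_id)
    (id_tensorHom := fun _ _ _ _ => rfl)
    (tensorHom_id := fun _ _ => rfl)
    (tensorHom_comp_tensorHom := tensHom_comp_tensHom)
    (associator_naturality := by
      intro _ _ _ _ _ _ f₁ f₂ f₃
      obtain ⟨f₁, rfl⟩ := Ar.hom_surjective f₁
      obtain ⟨f₂, rfl⟩ := Ar.hom_surjective f₂
      obtain ⟨f₃, rfl⟩ := Ar.hom_surjective f₃
      have h := Ar.hom_eq_hom_iff.mpr (Eqv.nat_b f₁ f₂ f₃)
      simp only [Ar.hom_comp, Ar.hom_tens, Ar.hom_bto] at h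
      rw [← Iso.inv_comp_eq, ← Category.assoc, h, Category.assoc, Iso.inv_hom_id,
        Category.comp_id])
    (leftUnitor_naturality := by
      intro _ _ f
      obtain ⟨f, rfl⟩ := Ar.hom_surjective f
      exact Quotient.sound (Eqv.nat_s f).symm)
    (rightUnitor_naturality := by
      intro _ _ f
      obtain ⟨f, rfl⟩ := Ar.hom_surjective f
      exact Quotient.sound (Eqv.nat_d f).symm)
    (pentagon := by
      intro W X Y Z
      -- `Eqv.pent` is the pentagon for the inverse associators
      have h : (α_ W X (Y ⊗ Z)).inv ≫ (α_ (W ⊗ X) Y Z).inv =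
          ((𝟙 W ⊗ₘ (α_ X Y Z).inv) ≫ (α_ W (X ⊗ Y) Z).inv) ≫ ((α_ W X Y).inv ⊗ₘ 𝟙 Z) :=
        Ar.hom_eq_hom_iff.mpr (Eqv.pent W X Y Z)
      rw [← cancel_mono ((α_ W X (Y ⊗ Z)).inv ≫ (α_ (W ⊗ X) Y Z).inv),
        show ((α_ (W ⊗ X) Y Z).hom ≫ (α_ W X (Y ⊗ Z)).hom) ≫ _ = 𝟙 _ by simp, h]
      simp only [Category.assoc]
      rw [← Category.assoc (𝟙 W ⊗ₘ (α_ X Y Z).hom), tensHom_comp_tensHom, Iso.hom_inv_id,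
        Category.id_comp, id_tensHom_id, Category.id_comp, Iso.hom_inv_id_assoc,
        tensHom_comp_tensHom, Iso.hom_inv_id, Category.id_comp, id_tensHom_id])
    (triangle := by
      intro X Y
      have h : (α_ X (𝟙_ _) Y).inv = (𝟙 X ⊗ₘ (λ_ Y).hom) ≫ ((ρ_ X).inv ⊗ₘ 𝟙 Y) :=
        Ar.hom_eq_hom_iff.mpr (Eqv.bds X Y)
      rw [← Iso.eq_inv_comp, h, Category.assoc, tensHom_comp_tensHom, Iso.inv_hom_id,
        Category.id_comp, id_tensHom_id, Category.comp_id])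

theorem Ar.hom_s_comp_s (x y : V) : (Ar.s x y).hom ≫ (Ar.s y x).hom = 𝟙 (Fm.rel x y) :=
  hom_eq_hom_iff.mpr (Eqv.sseq x y)

theorem tensHom_t_comp_t {A B C : Fm V} {x y z u : V} (f : A ⟶ .rel x y) (g : B ⟶ .rel y z)
    (h : C ⟶ .rel z u) :
    (((f ⊗ₘ g) ≫ (Ar.t x y z).hom) ⊗ₘ h) ≫ (Ar.t x z u).hom =
      (α_ A B C).hom ≫ (f ⊗ₘ ((g ⊗ₘ h) ≫ (Ar.t y z u).hom)) ≫ (Ar.t x y u).hom := by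
  have tb : (𝟙 (Fm.rel x y) ⊗ₘ (Ar.t y z u).hom) ≫ (Ar.t x y u).hom =
      (α_ _ _ _).inv ≫ ((Ar.t x y z).hom ⊗ₘ 𝟙 (Fm.rel z u)) ≫ (Ar.t x z u).hom := by
    simpa using Ar.hom_eq_hom_iff.mpr (Eqv.tb x y z u)
  calc _ = ((f ⊗ₘ g) ⊗ₘ h) ≫ ((Ar.t x y z).hom ⊗ₘ 𝟙 _) ≫ (Ar.t x z u).hom := by
        rw [← Category.assoc, tensHom_comp_tensHom, Category.comp_id]
    _ = (α_ A B C).hom ≫ (f ⊗ₘ g ⊗ₘ h) ≫ (𝟙 _ ⊗ₘ (Ar.t y z u).hom) ≫ (Ar.t x y u).hom := by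
        rw [tb, ← associator_naturality_assoc, Iso.hom_inv_id_assoc]
    _ = _ := by
        rw [← Category.assoc (f ⊗ₘ g ⊗ₘ h), tensHom_comp_tensHom, Category.comp_id]

end Category

section Coherence

open FreeMonoidalCategory

theorem eqToHom_tensorHom_eqToHom {C : Type*} [Category C] [MonoidalCategory C]
    {A A' B B' P P' Q Q' : C} (hA : A' = A) (hB : B = B') (hP : P' = P) (hQ : Q = Q')
    (f : A ⟶ B) (g : P ⟶ Q) :
    (eqToHom hA ≫ f ≫ eqToHom hB) ⊗ₘ (eqToHom hP ≫ g ≫ eqToHom hQ) =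
      eqToHom (by rw [hA, hP]) ≫ (f ⊗ₘ g) ≫ eqToHom (by rw [hB, hQ]) := by
  subst hA hB hP hQ
  simp

theorem associator_hom_eq_eqToHom {C : Type*} [Category C] [MonoidalCategory C]
    {A A' B B' P P' : C} (hA : A' = A) (hB : B' = B) (hP : P' = P) :
    (α_ A' B' P').hom =
      eqToHom (by rw [hA, hB, hP]) ≫ (α_ A B P).hom ≫ eqToHom (by rw [hA, hB, hP]) := by
  subst hA hB hP
  simp

theorem associator_inv_eq_eqToHom {C : Type*} [Category C] [MonoidalCategory C]
    {A A' B B' P P' : C} (hA : A' = A) (hB : B' = B) (hP : P' = P) :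
    (α_ A' B' P').inv =
      eqToHom (by rw [hA, hB, hP]) ≫ (α_ A B P).inv ≫ eqToHom (by rw [hA, hB, hP]) := by
  subst hA hB hP
  simp

-- `⊤` becomes a generator, not the unit: associativity arrows treat it as an ordinary leaf.
def Fm.toFree : Fm V → FreeMonoidalCategory (Fm V)
  | .rel x y => .of (.rel x y)
  | .top => .of .top
  | .and A B => (toFree A).tensor (toFree B)

theorem Fm.project_obj_toFree (A : Fm V) : (project fun A : Fm V => A).obj A.toFree = A := by
  induction A with
  | rel | top => rfl
  | and A B hA hB => exact congrArg₂ Fm.and hA hB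

inductive IsAssoc : ∀ {A B : Fm V}, Ar V A B → Prop
  | id (A : Fm V) : IsAssoc (Ar.id A)
  | comp {A B C : Fm V} {g : Ar V B C} {f : Ar V A B} :
      IsAssoc g → IsAssoc f → IsAssoc (g.comp f)
  | tens {A B C D : Fm V} {f : Ar V A B} {g : Ar V C D} :
      IsAssoc f → IsAssoc g → IsAssoc (f.tens g)
  | bto (A B C : Fm V) : IsAssoc (Ar.bto A B C)
  | bfrom (A B C : Fm V) : IsAssoc (Ar.bfrom A B C)

theorem IsAssoc.exists_free {A B : Fm V} {τ : Ar V A B} (h : IsAssoc τ) :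
    ∃ φ : A.toFree ⟶ B.toFree, (project fun A : Fm V => A).map φ =
      eqToHom A.project_obj_toFree ≫ τ.hom ≫ eqToHom B.project_obj_toFree.symm := by
  induction h with
  | id A => exact ⟨𝟙 _, by simp⟩
  | comp _ _ ihg ihf =>
    obtain ⟨φg, hg⟩ := ihg
    obtain ⟨φf, hf⟩ := ihf
    exact ⟨φf ≫ φg, by simp [hf, hg]⟩
  | tens _ _ ihf ihg =>
    obtain ⟨φf, hf⟩ := ihf
    obtain ⟨φg, hg⟩ := ihg
    refine ⟨φf ⊗ₘ φg, ?_⟩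
    obtain ⟨x, rfl⟩ := Quotient.exists_rep φf
    obtain ⟨y, rfl⟩ := Quotient.exists_rep φg
    exact (congrArg₂ (· ⊗ₘ ·) hf hg).trans (eqToHom_tensorHom_eqToHom _ _ _ _ _ _)
  | bto A B C =>
    exact ⟨(α_ _ _ _).inv, associator_inv_eq_eqToHom A.project_obj_toFree
      B.project_obj_toFree C.project_obj_toFree⟩
  | bfrom A B C =>
    exact ⟨(α_ _ _ _).hom, associator_hom_eq_eqToHom A.project_obj_toFree
      B.project_obj_toFree C.project_obj_toFree⟩

/-- Mac Lane's coherence theorem, transported from the free monoidal category. -/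
theorem IsAssoc.hom_eq {A B : Fm V} {τ τ' : Ar V A B} (h : IsAssoc τ) (h' : IsAssoc τ') :
    τ.hom = τ'.hom := by
  obtain ⟨φ, hφ⟩ := h.exists_free
  obtain ⟨φ', hφ'⟩ := h'.exists_free
  rw [Subsingleton.elim φ φ', hφ'] at hφ
  simpa [eqToHom_comp_iff, comp_eqToHom_iff] using hφ.symm

end Coherence

section NormalForms

def rdsLess {A B : Fm V} (f : Ar V A B) : Prop := rLess f ∧ dsLess f

namespace rdsLess

theorem of_comp {A B C : Fm V} {g : Ar V B C} {f : Ar V A B} (h : rdsLess (g.comp f)) :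
    rdsLess g ∧ rdsLess f :=
  ⟨⟨h.1.1, h.2.1⟩, ⟨h.1.2, h.2.2⟩⟩

theorem of_tens {A B C D : Fm V} {f : Ar V A B} {g : Ar V C D} (h : rdsLess (f.tens g)) :
    rdsLess f ∧ rdsLess g :=
  ⟨⟨h.1.1, h.2.1⟩, ⟨h.1.2, h.2.2⟩⟩

theorem comp {A B C : Fm V} {g : Ar V B C} {f : Ar V A B} (hg : rdsLess g) (hf : rdsLess f) :
    rdsLess (g.comp f) :=
  ⟨⟨hg.1, hf.1⟩, ⟨hg.2, hf.2⟩⟩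

theorem tens {A B C D : Fm V} {f : Ar V A B} {g : Ar V C D} (hf : rdsLess f) (hg : rdsLess g) :
    rdsLess (f.tens g) :=
  ⟨⟨hf.1, hg.1⟩, ⟨hf.2, hg.2⟩⟩

end rdsLess

inductive Realizes : ∀ {X : Fm V} (u v : V), Ar V X (.rel u v) → Prop
  | id (u v : V) : Realizes u v (Ar.id (.rel u v))
  | s (u v : V) : Realizes u v (Ar.s v u)
  | t {X₁ X₂ : Fm V} {u w v : V} {f : Ar V X₁ (.rel u w)} {g : Ar V X₂ (.rel w v)} :
      Realizes u w f → Realizes w v g → Realizes u v ((Ar.t u w v).comp (f.tens g))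
  | st {X₁ X₂ : Fm V} {u w v : V} {f : Ar V X₁ (.rel v w)} {g : Ar V X₂ (.rel w u)} :
      Realizes v w f → Realizes w u g →
        Realizes u v ((Ar.s v u).comp ((Ar.t v w u).comp (f.tens g)))

inductive IsNormal : ∀ {X B : Fm V}, Ar V X B → Prop
  | top : IsNormal (Ar.id .top)
  | rel {X : Fm V} {u v : V} {f : Ar V X (.rel u v)} : Realizes u v f → IsNormal f
  | tens {X₁ X₂ B₁ B₂ : Fm V} {f : Ar V X₁ B₁} {g : Ar V X₂ B₂} :
      IsNormal f → IsNormal g → IsNormal (f.tens g)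

theorem Realizes.rdsLess {X : Fm V} {u v : V} {f : Ar V X (.rel u v)} (h : Realizes u v f) :
    rdsLess f := by
  induction h with
  | id | s => exact ⟨trivial, trivial⟩
  | t _ _ ihf ihg => exact rdsLess.comp ⟨trivial, trivial⟩ (ihf.tens ihg)
  | st _ _ ihf ihg =>
    exact rdsLess.comp ⟨trivial, trivial⟩ (rdsLess.comp ⟨trivial, trivial⟩ (ihf.tens ihg))

theorem IsNormal.rdsLess {X B : Fm V} {f : Ar V X B} (h : IsNormal f) : rdsLess f := by
  induction h with
  | top => exact ⟨trivial, trivial⟩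
  | rel h => exact h.rdsLess
  | tens _ _ ihf ihg => exact ihf.tens ihg

theorem Realizes.exists_comp_s {X : Fm V} {u v : V} {f : Ar V X (.rel u v)}
    (h : Realizes u v f) : ∃ f', Realizes v u f' ∧ f.hom ≫ (Ar.s u v).hom = f'.hom := by
  cases h with
  | id => exact ⟨_, .s v u, Category.id_comp _⟩
  | s => exact ⟨_, .id v u, Ar.hom_s_comp_s v u⟩
  | t hf hg => exact ⟨_, .st hf hg, rfl⟩
  | st hf hg => exact ⟨_, .t hf hg, by simp [Ar.hom_s_comp_s]⟩

theorem Realizes.exists_eq_comp {Y : Fm V} {u v : V} {p : Ar V Y (.rel u v)}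
    (hp : Realizes u v p) :
    ∀ {X : Fm V} {q : Ar V X Y}, IsNormal q → ∃ r, Realizes u v r ∧ q.hom ≫ p.hom = r.hom := by
  induction hp with
  | id => rintro _ _ (_ | hq); exact ⟨_, hq, Category.comp_id _⟩
  | s => rintro _ _ (_ | hq); exact hq.exists_comp_s
  | t _ _ ihf ihg =>
    rintro _ _ (_ | _ | ⟨hq₁, hq₂⟩)
    obtain ⟨r₁, hr₁, e₁⟩ := ihf hq₁
    obtain ⟨r₂, hr₂, e₂⟩ := ihg hq₂
    exact ⟨_, .t hr₁ hr₂, by simp [← e₁, ← e₂]⟩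
  | st _ _ ihf ihg =>
    rintro _ _ (_ | _ | ⟨hq₁, hq₂⟩)
    obtain ⟨r₁, hr₁, e₁⟩ := ihf hq₁
    obtain ⟨r₂, hr₂, e₂⟩ := ihg hq₂
    exact ⟨_, .st hr₁ hr₂, by simp [← e₁, ← e₂]⟩

theorem IsNormal.exists_eq_comp {Y B : Fm V} {p : Ar V Y B} (hp : IsNormal p) :
    ∀ {X : Fm V} {q : Ar V X Y}, IsNormal q → ∃ r, IsNormal r ∧ q.hom ≫ p.hom = r.hom := by
  induction hp with
  | top => intro _ q hq; exact ⟨q, hq, Category.comp_id _⟩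
  | rel hp =>
    intro _ _ hq
    obtain ⟨r, hr, e⟩ := hp.exists_eq_comp hq
    exact ⟨r, .rel hr, e⟩
  | tens _ _ ih₁ ih₂ =>
    rintro _ _ (_ | _ | ⟨hq₁, hq₂⟩)
    obtain ⟨r₁, hr₁, e₁⟩ := ih₁ hq₁
    obtain ⟨r₂, hr₂, e₂⟩ := ih₂ hq₂
    exact ⟨_, hr₁.tens hr₂, by simp [← e₁, ← e₂]⟩

theorem IsNormal.exists_eq_id (B : Fm V) : ∃ n : Ar V B B, IsNormal n ∧ n.hom = 𝟙 B := by
  induction B with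
  | rel u v => exact ⟨_, .rel (.id u v), rfl⟩
  | top => exact ⟨_, .top, rfl⟩
  | and B₁ B₂ ih₁ ih₂ =>
    obtain ⟨n₁, h₁, e₁⟩ := ih₁
    obtain ⟨n₂, h₂, e₂⟩ := ih₂
    exact ⟨_, h₁.tens h₂, by simp only [Ar.hom_tens, e₁, e₂, id_tensHom_id]; rfl⟩

theorem IsAssoc.exists_comm_isNormal {M M' : Fm V} {σ : Ar V M M'} (hσ : IsAssoc σ) :
    ∀ {X : Fm V} {n : Ar V X M}, IsNormal n →
      ∃ (X' : Fm V) (n' : Ar V X' M') (σ' : Ar V X X'),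
        IsNormal n' ∧ IsAssoc σ' ∧ n.hom ≫ σ.hom = σ'.hom ≫ n'.hom := by
  induction hσ with
  | id A => intro X n hn; exact ⟨X, n, _, hn, .id X, by simp⟩
  | comp _ _ ihg ihf =>
    intro X n hn
    obtain ⟨X', n', σ', hn', hσ', e'⟩ := ihf hn
    obtain ⟨X'', n'', σ'', hn'', hσ'', e''⟩ := ihg hn'
    exact ⟨X'', n'', _, hn'', hσ''.comp hσ', by simp [reassoc_of% e', e'']⟩
  | tens _ _ ih₁ ih₂ =>
    rintro _ _ (_ | _ | ⟨hn₁, hn₂⟩)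
    obtain ⟨X₁, n₁, σ₁, h₁, p₁, e₁⟩ := ih₁ hn₁
    obtain ⟨X₂, n₂, σ₂, h₂, p₂, e₂⟩ := ih₂ hn₂
    exact ⟨_, _, _, h₁.tens h₂, p₁.tens p₂, by simp [e₁, e₂]⟩
  | bto =>
    rintro _ _ (_ | _ | ⟨hn₁, _ | _ | ⟨hn₂, hn₃⟩⟩)
    exact ⟨_, _, _, (hn₁.tens hn₂).tens hn₃, .bto _ _ _, by simp⟩
  | bfrom =>
    rintro _ _ (_ | _ | ⟨_ | _ | ⟨hn₁, hn₂⟩, hn₃⟩)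
    exact ⟨_, _, _, hn₁.tens (hn₂.tens hn₃), .bfrom _ _ _, by simp⟩

theorem rdsLess.exists_isAssoc_isNormal {A B : Fm V} {f : Ar V A B} (hf : rdsLess f) :
    ∃ (A' : Fm V) (ρ : Ar V A A') (n : Ar V A' B),
      IsAssoc ρ ∧ IsNormal n ∧ f.hom = ρ.hom ≫ n.hom := by
  induction f with
  | id A =>
    obtain ⟨n, hn, e⟩ := IsNormal.exists_eq_id A
    exact ⟨A, _, n, .id A, hn, by simp [e]⟩
  | comp g h ihg ihh =>
    obtain ⟨_, ρh, nh, hρh, hnh, eh⟩ := ihh hf.of_comp.2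
    obtain ⟨_, ρg, ng, hρg, hng, eg⟩ := ihg hf.of_comp.1
    obtain ⟨X, n', σ', hn', hσ', e'⟩ := hρg.exists_comm_isNormal hnh
    obtain ⟨r, hr, er⟩ := hng.exists_eq_comp hn'
    exact ⟨X, _, r, hσ'.comp hρh, hr, by simp [eh, eg, reassoc_of% e', er]⟩
  | tens f₁ f₂ ih₁ ih₂ =>
    obtain ⟨_, ρ₁, n₁, hρ₁, hn₁, e₁⟩ := ih₁ hf.of_tens.1
    obtain ⟨_, ρ₂, n₂, hρ₂, hn₂, e₂⟩ := ih₂ hf.of_tens.2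
    exact ⟨_, _, _, hρ₁.tens hρ₂, hn₁.tens hn₂, by simp [e₁, e₂]⟩
  | bto A B C =>
    obtain ⟨n, hn, e⟩ := IsNormal.exists_eq_id _
    exact ⟨_, _, n, .bto A B C, hn, by simp [e]⟩
  | bfrom A B C =>
    obtain ⟨n, hn, e⟩ := IsNormal.exists_eq_id _
    exact ⟨_, _, n, .bfrom A B C, hn, by simp [e]⟩
  | t x y z =>
    refine ⟨_, _, _, .id _, .rel (.t (.id x y) (.id y z)), ?_⟩
    rw [Ar.hom_comp, Ar.hom_tens, Ar.hom_id, Ar.hom_id, Ar.hom_id, id_tensHom_id,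
      Category.id_comp]
    exact (Category.id_comp (Ar.t x y z).hom).symm
  | s x y => exact ⟨_, _, _, .id _, .rel (.s y x), by simp⟩
  | dto | dfrom | sto | sfrom => exact hf.2.elim
  | r => exact hf.1.elim

end NormalForms

section Leaves

def Fm.countTop : Fm V → ℕ
  | .rel _ _ => 0
  | .top => 1
  | .and A B => A.countTop + B.countTop

theorem rdsLess.countTop_eq {A B : Fm V} {f : Ar V A B} (hf : rdsLess f) :
    A.countTop = B.countTop := by
  induction f with
  | comp g f ihg ihf => exact (ihf hf.of_comp.2).trans (ihg hf.of_comp.1)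
  | tens f g ihf ihg => simp only [Fm.countTop, ihf hf.of_tens.1, ihg hf.of_tens.2]
  | bto | bfrom => simp only [Fm.countTop]; omega
  | dto | dfrom | sto | sfrom => exact hf.2.elim
  | r => exact hf.1.elim
  | id | t | s => rfl

def Fm.leaves : Fm V → List (Fm V)
  | .rel x y => [.rel x y]
  | .top => [.top]
  | .and A B => A.leaves ++ B.leaves

theorem Fm.leaves_ne_nil (A : Fm V) : A.leaves ≠ [] := by
  induction A with
  | rel | top => simp [Fm.leaves]
  | and A B ihA _ => simp [Fm.leaves, ihA]

theorem Fm.sum_map_countTop_leaves (A : Fm V) : (A.leaves.map Fm.countTop).sum = A.countTop := by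
  induction A with
  | rel | top => simp [Fm.leaves, Fm.countTop]
  | and A B ihA ihB => simp [Fm.leaves, Fm.countTop, ihA, ihB]

theorem IsAssoc.leaves_eq {A B : Fm V} {τ : Ar V A B} (h : IsAssoc τ) : A.leaves = B.leaves := by
  induction h with
  | id => rfl
  | comp _ _ ihg ihf => exact ihf.trans ihg
  | tens _ _ ihf ihg => simp [Fm.leaves, ihf, ihg]
  | bto | bfrom => simp [Fm.leaves]

end Leaves

section Uniqueness

variable [DecidableEq V]

theorem rdsLess.even_countF_add {A B : Fm V} {f : Ar V A B} (hf : rdsLess f) (x : V) :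
    Even (countF x A + countF x B) := by
  induction f with
  | id => exact ⟨_, rfl⟩
  | @comp A B C g f ihg ihf =>
    obtain ⟨a, ha⟩ := ihg hf.of_comp.1
    obtain ⟨b, hb⟩ := ihf hf.of_comp.2
    exact ⟨a + b - countF x B, by omega⟩
  | tens f g ihf ihg =>
    obtain ⟨a, ha⟩ := ihf hf.of_tens.1
    obtain ⟨b, hb⟩ := ihg hf.of_tens.2
    exact ⟨a + b, by simp only [countF]; omega⟩
  | bto A B C | bfrom A B C =>
    exact ⟨countF x A + countF x B + countF x C, by simp only [countF]; omega⟩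
  | dto | dfrom | sto | sfrom => exact hf.2.elim
  | r => exact hf.1.elim
  | t a b c => simp only [countF]; split_ifs <;> decide
  | s a b => exact ⟨countF x (.rel a b), by simp only [countF]; omega⟩

theorem rdsLess.countF_pos {A B : Fm V} {f : Ar V A B} (hf : rdsLess f) {x : V}
    (hx : 0 < countF x B) : 0 < countF x A := by
  induction f with
  | id => exact hx
  | comp g f ihg ihf => exact ihf hf.of_comp.2 (ihg hf.of_comp.1 hx)
  | @tens A B C D f g ihf ihg =>
    simp only [countF] at hx ⊢
    rcases Nat.eq_zero_or_pos (countF x B) with h | h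
    · have := ihg hf.of_tens.2 (by omega); omega
    · have := ihf hf.of_tens.1 h; omega
  | bto | bfrom => simp only [countF] at hx ⊢; omega
  | dto | dfrom | sto | sfrom => exact hf.2.elim
  | r => exact hf.1.elim
  | t a b c => simp only [countF] at hx ⊢; split_ifs at hx ⊢ <;> omega
  | s a b => simp only [countF] at hx ⊢; omega

theorem Fm.exists_countF_pos_of_countTop_eq_zero {B : Fm V} (h : B.countTop = 0) :
    ∃ x, 0 < countF x B := by
  induction B with
  | rel a b => exact ⟨a, by simp [countF]⟩
  | top => simp [Fm.countTop] at h
  | and B₁ B₂ ih₁ _ =>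
    obtain ⟨x, hx⟩ := ih₁ (by simp only [Fm.countTop] at h; omega)
    exact ⟨x, by simp only [countF]; omega⟩

theorem rdsLess.exists_countF_pos {A B : Fm V} {f : Ar V A B} (hf : rdsLess f)
    (h : A.countTop = 0) : ∃ x, 0 < countF x A ∧ 0 < countF x B := by
  obtain ⟨x, hx⟩ := Fm.exists_countF_pos_of_countTop_eq_zero (hf.countTop_eq ▸ h)
  exact ⟨x, hf.countF_pos hx, hx⟩

theorem Realizes.countF_pos_left {X : Fm V} {u v : V} {r : Ar V X (.rel u v)}
    (hr : Realizes u v r) : 0 < countF u X :=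
  hr.rdsLess.countF_pos (by simp [countF])

theorem Realizes.countF_pos_right {X : Fm V} {u v : V} {r : Ar V X (.rel u v)}
    (hr : Realizes u v r) : 0 < countF v X :=
  hr.rdsLess.countF_pos (by simp [countF])

def countL (x : V) (L : List (Fm V)) : ℕ := (L.map (countF x)).sum

@[simp] theorem countL_nil (x : V) : countL x ([] : List (Fm V)) = 0 := rfl

@[simp] theorem countL_append (x : V) (L₁ L₂ : List (Fm V)) :
    countL x (L₁ ++ L₂) = countL x L₁ + countL x L₂ := by
  simp [countL]

@[simp] theorem countL_leaves (x : V) (A : Fm V) : countL x A.leaves = countF x A := by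
  induction A with
  | rel | top => simp [countL, Fm.leaves]
  | and A B ihA ihB => simp [Fm.leaves, countF, ihA, ihB]

def Connected (L : List (Fm V)) : Prop :=
  ∀ P S, L = P ++ S → P ≠ [] → S ≠ [] → ∃ x, 0 < countL x P ∧ 0 < countL x S

theorem connected_singleton (A : Fm V) : Connected [A] := by
  intro P S h hP hS
  rcases List.singleton_eq_append_iff.mp h with ⟨rfl, -⟩ | ⟨-, rfl⟩ <;> contradiction

theorem Connected.append {L₁ L₂ : List (Fm V)} (h₁ : Connected L₁) (h₂ : Connected L₂) {w : V}
    (hw₁ : 0 < countL w L₁) (hw₂ : 0 < countL w L₂) : Connected (L₁ ++ L₂) := by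
  intro P S h hP hS
  rcases List.append_eq_append_iff.mp h with ⟨M, rfl, rfl⟩ | ⟨M, rfl, rfl⟩
  · rcases eq_or_ne M [] with rfl | hM
    · exact ⟨w, by simpa using hw₁, by simpa using hw₂⟩
    · obtain ⟨x, hxM, hxS⟩ := h₂ M S rfl hM hS
      exact ⟨x, by simp; omega, hxS⟩
  · rcases eq_or_ne M [] with rfl | hM
    · exact ⟨w, by simpa using hw₁, by simpa using hw₂⟩
    · obtain ⟨x, hxP, hxM⟩ := h₁ P M rfl hP hM
      exact ⟨x, hxP, by simp; omega⟩

theorem Realizes.connected {X : Fm V} {u v : V} {r : Ar V X (.rel u v)} (hr : Realizes u v r) :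
    Connected X.leaves := by
  induction hr with
  | id | s => exact connected_singleton _
  | t hf hg ihf ihg | st hf hg ihf ihg =>
    exact ihf.append ihg (by simpa using hf.countF_pos_right) (by simpa using hg.countF_pos_left)

/-- What a diversified type says about the leaves of one of its atoms `u ≡ v`. -/
structure Tight (L : List (Fm V)) (u v : V) : Prop where
  le_two : ∀ x, countL x L ≤ 2
  left : countL u L = 1
  right : countL v L = 1

theorem Tight.symm {L : List (Fm V)} {u v : V} (h : Tight L u v) : Tight L v u :=
  ⟨h.le_two, h.right, h.left⟩

theorem Tight.of_append {L₁ L₂ : List (Fm V)} {u w v : V} (h : Tight (L₁ ++ L₂) u v)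
    (hu : 0 < countL u L₁) (hw₁ : 0 < countL w L₁) (hw₂ : 0 < countL w L₂)
    (hv : 0 < countL v L₂) : Tight L₁ u w ∧ Tight L₂ w v := by
  have hle := h.le_two
  have hu' := h.left
  have hv' := h.right
  have hw := hle w
  simp only [countL_append] at hle hu' hv' hw
  exact ⟨⟨fun x => by have := hle x; omega, by omega, by omega⟩,
    ⟨fun x => by have := hle x; omega, by omega, by omega⟩⟩

theorem Realizes.tight {X : Fm V} {u v : V} {r : Ar V X (.rel u v)} (hr : Realizes u v r)
    (hle : ∀ x, countF x X + countF x (.rel u v) ≤ 2) : Tight X.leaves u v := by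
  have hu := hle u
  have hv := hle v
  have hu₀ := hr.countF_pos_left
  have hv₀ := hr.countF_pos_right
  simp only [countF, if_pos] at hu hv
  refine ⟨fun x => by simpa using (hle x).trans' (Nat.le_add_right _ _), ?_, ?_⟩ <;>
    simp only [countL_leaves] <;> split_ifs at hu hv <;> omega

theorem Connected.countL_pos_of_crossing_left {L₁ M S : List (Fm V)} (h : Connected (M ++ S))
    (hM : M ≠ []) (hS : S ≠ []) {w w' : V} (hw₁ : 0 < countL w' L₁) (hw₂ : 0 < countL w' (M ++ S))
    (hcross : ∀ y, 0 < countL y (L₁ ++ M) → 0 < countL y S → y = w) : 0 < countL w' M := by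
  obtain ⟨x, hxM, hxS⟩ := h M S rfl hM hS
  obtain rfl : x = w := hcross x (by simp; omega) hxS
  by_contra h₀
  obtain rfl : w' = x := hcross w' (by simp; omega) (by simp at hw₂; omega)
  omega

theorem Connected.countL_pos_of_crossing_right {P M L₂ : List (Fm V)} (h : Connected (P ++ M))
    (hP : P ≠ []) (hM : M ≠ []) {w w' : V} (hw₁ : 0 < countL w' (P ++ M)) (hw₂ : 0 < countL w' L₂)
    (hcross : ∀ y, 0 < countL y P → 0 < countL y (M ++ L₂) → y = w) : 0 < countL w' M := by
  obtain ⟨x, hxP, hxM⟩ := h P M rfl hP hM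
  obtain rfl : x = w := hcross x hxP (by simp; omega)
  by_contra h₀
  obtain rfl : w' = x := hcross w' (by simp at hw₁; omega) (by simp; omega)
  omega

/-- Rotations by `tensHom_t_comp_t` bring the cut to the root; with a final `s` the variable `v`
would lie to the left of `u`. -/
theorem Realizes.exists_split {X : Fm V} {u v : V} {r : Ar V X (.rel u v)} (hr : Realizes u v r)
    (htight : Tight X.leaves u v) {P S : List (Fm V)} (hPS : X.leaves = P ++ S) {w : V}
    (hu : 0 < countL u P) (hv : 0 < countL v S)
    (hcross : ∀ y, 0 < countL y P → 0 < countL y S → y = w) :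
    ∃ (Y₁ Y₂ : Fm V) (f : Ar V Y₁ (.rel u w)) (g : Ar V Y₂ (.rel w v)) (τ : Ar V (Y₁.and Y₂) X),
      Realizes u w f ∧ Realizes w v g ∧ Y₁.leaves = P ∧ Y₂.leaves = S ∧ IsAssoc τ ∧
      τ.hom ≫ r.hom = (f.hom ⊗ₘ g.hom) ≫ (Ar.t u w v).hom := by
  have hP₀ : P ≠ [] := by rintro rfl; simp at hu
  have hS₀ : S ≠ [] := by rintro rfl; simp at hv
  induction hr generalizing P S with
  | id | s => rcases List.singleton_eq_append_iff.mp hPS with ⟨rfl, -⟩ | ⟨-, rfl⟩ <;> contradiction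
  | @t X₁ X₂ u w' v f g hf hg ihf ihg =>
    have hw₁ : 0 < countL w' X₁.leaves := by simpa using hf.countF_pos_right
    have hw₂ : 0 < countL w' X₂.leaves := by simpa using hg.countF_pos_left
    obtain ⟨t₁, t₂⟩ := htight.of_append (by simpa using hf.countF_pos_left) hw₁ hw₂
      (by simpa using hg.countF_pos_right)
    by_cases hP : X₁.leaves = P
    · subst hP
      have hS : X₂.leaves = S := List.append_cancel_left hPS
      obtain rfl : w' = w := hcross w' hw₁ (hS ▸ hw₂)
      exact ⟨X₁, X₂, f, g, Ar.id _, hf, hg, rfl, hS, .id _, by simp⟩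
    rcases List.append_eq_append_iff.mp hPS with ⟨M, rfl, hM⟩ | ⟨M, hM, rfl⟩
    · have hM₀ : M ≠ [] := by rintro rfl; simp at hP
      have hwM := (hM ▸ hg.connected).countL_pos_of_crossing_left hM₀ hS₀ hw₁ (hM ▸ hw₂) hcross
      obtain ⟨Y₁, Y₂, g₁, g₂, τ, hg₁, hg₂, rfl, rfl, hτ, e⟩ :=
        ihg t₂ hM hwM hv (fun y hyM hyS => hcross y (by simp; omega) hyS) hM₀ hS₀
      refine ⟨X₁.and Y₁, Y₂, _, g₂, ((Ar.id X₁).tens τ).comp (Ar.bfrom X₁ Y₁ Y₂), .t hf hg₁, hg₂,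
        rfl, rfl, ((IsAssoc.id _).tens hτ).comp (.bfrom _ _ _), ?_⟩
      simp only [Ar.hom_comp, Ar.hom_tens, Ar.hom_id, Ar.hom_bfrom, Category.assoc]
      rw [tensHom_t_comp_t, ← e, ← Category.assoc (𝟙 _ ⊗ₘ τ.hom), tensHom_comp_tensHom,
        Category.id_comp]
    · have hM₀ : M ≠ [] := by rintro rfl; simp at hM; exact hP hM
      have hwM := (hM ▸ hf.connected).countL_pos_of_crossing_right hP₀ hM₀ (hM ▸ hw₁) hw₂ hcross
      obtain ⟨Y₁, Y₂, f₁, f₂, τ, hf₁, hf₂, rfl, rfl, hτ, e⟩ :=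
        ihf t₁ hM hu hwM (fun y hyP hyM => hcross y hyP (by simp; omega)) hP₀ hM₀
      refine ⟨Y₁, Y₂.and X₂, f₁, _, (τ.tens (Ar.id X₂)).comp (Ar.bto Y₁ Y₂ X₂), hf₁, .t hf₂ hg,
        rfl, rfl, (hτ.tens (.id _)).comp (.bto _ _ _), ?_⟩
      simp only [Ar.hom_comp, Ar.hom_tens, Ar.hom_id, Ar.hom_bto, Category.assoc]
      rw [← Category.assoc (τ.hom ⊗ₘ 𝟙 _), tensHom_comp_tensHom, Category.id_comp, e,
        tensHom_t_comp_t, Iso.inv_hom_id_assoc]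
  | @st X₁ X₂ u w' v f g hf hg =>
    have hv₁ : 0 < countL v X₁.leaves := by simpa using hf.countF_pos_left
    have hu₂ : 0 < countL u X₂.leaves := by simpa using hg.countF_pos_right
    have hu' := htight.right
    have hv' := htight.left
    rw [hPS, countL_append] at hu' hv'
    rcases List.append_eq_append_iff.mp hPS with ⟨M, rfl, -⟩ | ⟨M, -, rfl⟩ <;>
      simp only [countL_append] at hu hv hu' hv' <;> omega

theorem Realizes.eq_of_countL_pos {X₁ : Fm V} {u w : V} {f : Ar V X₁ (.rel u w)}
    (hf : Realizes u w f) {L₂ : List (Fm V)} {v : V} (htight : Tight (X₁.leaves ++ L₂) u v)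
    {y : V} (hy₁ : 0 < countL y X₁.leaves) (hy₂ : 0 < countL y L₂) : y = w := by
  by_contra hyw
  have hle := htight.le_two y
  have hu := htight.left
  simp only [countL_append] at hle hu
  by_cases hyu : y = u
  · subst hyu; omega
  obtain ⟨k, hk⟩ := hf.rdsLess.even_countF_add y
  simp only [countF, if_neg (Ne.symm hyu), if_neg (Ne.symm hyw), countL_leaves] at hk hy₁ hle
  omega

def AssocUnique {X : Fm V} {u v : V} (r : Ar V X (.rel u v)) : Prop :=
  ∀ ⦃Y : Fm V⦄ ⦃r' : Ar V Y (.rel u v)⦄, Realizes u v r' → X.leaves = Y.leaves →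
    Tight X.leaves u v → ∃ τ : Ar V X Y, IsAssoc τ ∧ r.hom = τ.hom ≫ r'.hom

theorem AssocUnique.t {X₁ X₂ : Fm V} {u w v : V} {f : Ar V X₁ (.rel u w)} {g : Ar V X₂ (.rel w v)}
    (hf : Realizes u w f) (hg : Realizes w v g) (uf : AssocUnique f) (ug : AssocUnique g) :
    AssocUnique ((Ar.t u w v).comp (f.tens g)) := by
  intro Y r' hr' hXY htight
  have hu : 0 < countL u X₁.leaves := by simpa using hf.countF_pos_left
  have hv : 0 < countL v X₂.leaves := by simpa using hg.countF_pos_right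
  obtain ⟨t₁, t₂⟩ := htight.of_append hu (by simpa using hf.countF_pos_right)
    (by simpa using hg.countF_pos_left) hv
  obtain ⟨Y₁, Y₂, f', g', τ, hf', hg', h₁, h₂, hτ, e⟩ := hr'.exists_split (hXY ▸ htight)
    hXY.symm hu hv fun y hy₁ hy₂ => hf.eq_of_countL_pos htight hy₁ hy₂
  obtain ⟨τ₁, hτ₁, e₁⟩ := uf hf' h₁.symm t₁
  obtain ⟨τ₂, hτ₂, e₂⟩ := ug hg' h₂.symm t₂
  refine ⟨τ.comp (τ₁.tens τ₂), hτ.comp (hτ₁.tens hτ₂), ?_⟩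
  simp only [Ar.hom_comp, Ar.hom_tens, Category.assoc, e₁, e₂]
  rw [← tensHom_comp_tensHom, Category.assoc, ← e]

theorem Realizes.assocUnique {X : Fm V} {u v : V} {r : Ar V X (.rel u v)} (hr : Realizes u v r) :
    AssocUnique r := by
  induction hr with
  | id u v =>
    intro Y r' hr' hXY htight
    cases hr' with
    | id => exact ⟨Ar.id _, .id _, by simp⟩
    | s =>
      obtain ⟨rfl, -⟩ : u = v ∧ v = u := by simpa [Fm.leaves] using hXY
      exact absurd htight.left (by simp [countL, countF, Fm.leaves])
    | t | st => simp [Fm.leaves, List.singleton_eq_append_iff, Fm.leaves_ne_nil] at hXY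
  | s u v =>
    intro Y r' hr' hXY htight
    cases hr' with
    | s => exact ⟨Ar.id _, .id _, by simp⟩
    | id =>
      obtain ⟨rfl, -⟩ : v = u ∧ u = v := by simpa [Fm.leaves] using hXY
      exact absurd htight.left (by simp [countL, countF, Fm.leaves])
    | t | st => simp [Fm.leaves, List.singleton_eq_append_iff, Fm.leaves_ne_nil] at hXY
  | t hf hg ihf ihg => exact .t hf hg ihf ihg
  | st hf hg ihf ihg =>
    intro Y r' hr' hXY htight
    obtain ⟨r'', hr'', e⟩ := hr'.exists_comp_s
    obtain ⟨τ, hτ, e'⟩ := AssocUnique.t hf hg ihf ihg hr'' hXY htight.symm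
    refine ⟨τ, hτ, ?_⟩
    simp only [Ar.hom_comp, Ar.hom_tens, Category.assoc] at e' ⊢
    rw [reassoc_of% e', ← e, Category.assoc, Ar.hom_s_comp_s, Category.comp_id]

theorem IsNormal.exists_countL_pos_of_suffix {Y B : Fm V} {p : Ar V Y B} (hp : IsNormal p)
    {P S : List (Fm V)} (h : Y.leaves = P ++ S) (hP : P ≠ []) (hS : S ≠ [])
    (htop : (S.map Fm.countTop).sum = 0) :
    ∃ x, 0 < countL x S ∧ (0 < countL x P ∨ 0 < countF x B) := by
  induction hp generalizing P S with
  | top =>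
    rcases List.singleton_eq_append_iff.mp h with ⟨rfl, -⟩ | ⟨-, rfl⟩ <;> contradiction
  | rel hr =>
    obtain ⟨x, hxP, hxS⟩ := hr.connected P S h hP hS
    exact ⟨x, hxS, .inl hxP⟩
  | @tens Y₁ Y₂ B₁ B₂ p₁ p₂ hp₁ hp₂ _ ih₂ =>
    have of_suffix : ∀ M, S = M ++ Y₂.leaves →
        ∃ x, 0 < countL x S ∧ (0 < countL x P ∨ 0 < countF x (B₁.and B₂)) := by
      rintro M rfl
      simp only [List.map_append, List.sum_append, Fm.sum_map_countTop_leaves] at htop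
      obtain ⟨x, hx, hxB⟩ := hp₂.rdsLess.exists_countF_pos (by omega)
      exact ⟨x, by simp; omega, .inr (by simp only [countF]; omega)⟩
    rcases List.append_eq_append_iff.mp h with ⟨M, rfl, hM⟩ | ⟨M, -, hM⟩
    · rcases eq_or_ne M [] with rfl | hM₀
      · exact of_suffix [] hM.symm
      obtain ⟨x, hxS, hx⟩ := ih₂ hM hM₀ hS htop
      exact ⟨x, hxS, by simp only [countL_append, countF]; omega⟩
    · exact of_suffix M hM

theorem IsNormal.eq_nil_of_leaves_eq_append {X Y B : Fm V} {n : Ar V X B} {n' : Ar V Y B}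
    (hn : IsNormal n) (hn' : IsNormal n') {M : List (Fm V)} (h : Y.leaves = X.leaves ++ M)
    (hle : ∀ x, countF x Y + countF x B ≤ 2) : M = [] := by
  by_contra hM
  have htop : (M.map Fm.countTop).sum = 0 := by
    have := congrArg (fun L => (L.map Fm.countTop).sum) h
    simp only [Fm.sum_map_countTop_leaves, List.map_append, List.sum_append] at this
    rw [hn.rdsLess.countTop_eq, hn'.rdsLess.countTop_eq] at this
    omega
  obtain ⟨x, hxM, hx⟩ := hn'.exists_countL_pos_of_suffix h X.leaves_ne_nil hM htop
  have hY : countF x Y = countF x X + countL x M := by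
    rw [← countL_leaves, h, countL_append, countL_leaves]
  obtain ⟨a, ha⟩ := hn.rdsLess.even_countF_add x
  obtain ⟨b, hb⟩ := hn'.rdsLess.even_countF_add x
  have := hle x
  rw [countL_leaves] at hx
  -- by parity `x` occurs twice in `M`, leaving no room for it in `X` or `B`
  omega

theorem IsNormal.exists_isAssoc_of_leaves_eq {B X Y : Fm V} {n : Ar V X B} {n' : Ar V Y B}
    (hn : IsNormal n) (hn' : IsNormal n') (hXY : X.leaves = Y.leaves)
    (hle : ∀ x, countF x X + countF x B ≤ 2) :
    ∃ τ : Ar V X Y, IsAssoc τ ∧ n.hom = τ.hom ≫ n'.hom := by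
  induction B generalizing X Y with
  | rel u v =>
    rcases hn with _ | hr
    rcases hn' with _ | hr'
    exact hr.assocUnique hr' hXY (hr.tight hle)
  | top =>
    rcases hn with _ | ⟨⟩
    rcases hn' with _ | ⟨⟩
    exact ⟨Ar.id _, .id _, by simp⟩
  | and B₁ B₂ ih₁ ih₂ =>
    rcases hn with _ | _ | @⟨X₁, X₂, _, _, n₁, n₂, hn₁, hn₂⟩
    rcases hn' with _ | _ | @⟨Y₁, Y₂, _, _, n₁', n₂', hn₁', hn₂'⟩
    have hcount : ∀ x, countF x X₁ + countF x X₂ = countF x Y₁ + countF x Y₂ := fun x => by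
      simpa [Fm.leaves, countF] using congrArg (countL x) hXY
    have hle' : ∀ x, countF x X₁ + countF x X₂ + (countF x B₁ + countF x B₂) ≤ 2 := hle
    have h₁ : X₁.leaves = Y₁.leaves := by
      rcases List.append_eq_append_iff.mp hXY with ⟨M, hM, -⟩ | ⟨M, hM, -⟩
      · rw [hM, hn₁.eq_nil_of_leaves_eq_append hn₁' hM fun x => by
          have := hle' x; have := hcount x; omega, List.append_nil]
      · rw [hM, hn₁'.eq_nil_of_leaves_eq_append hn₁ hM fun x => by
          have := hle' x; omega, List.append_nil]
    have h₂ : X₂.leaves = Y₂.leaves := by simpa [Fm.leaves, h₁] using hXY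
    obtain ⟨τ₁, hτ₁, e₁⟩ := ih₁ hn₁ hn₁' h₁ fun x => by have := hle' x; omega
    obtain ⟨τ₂, hτ₂, e₂⟩ := ih₂ hn₂ hn₂' h₂ fun x => by have := hle' x; omega
    exact ⟨τ₁.tens τ₂, hτ₁.tens hτ₂, by simp [e₁, e₂]⟩

end Uniqueness

theorem stmt13_general {V : Type} [DecidableEq V] {A B : Fm V} (f g : Ar V A B)
    (hrf : rLess f) (hrg : rLess g)
    (hsf : dsLess f) (hsg : dsLess g)
    (hdiv : Diversified A B) :
    Eqv f g := by
  obtain ⟨A₁, ρ, n, hρ, hn, ef⟩ := rdsLess.exists_isAssoc_isNormal (f := f) ⟨hrf, hsf⟩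
  obtain ⟨A₂, ρ', n', hρ', hn', eg⟩ := rdsLess.exists_isAssoc_isNormal (f := g) ⟨hrg, hsg⟩
  have hle : ∀ x, countF x A₁ + countF x B ≤ 2 := fun x => by
    rw [← countL_leaves, ← hρ.leaves_eq, countL_leaves]
    rcases hdiv x with h | h <;> omega
  obtain ⟨τ, hτ, e⟩ :=
    hn.exists_isAssoc_of_leaves_eq hn' (hρ.leaves_eq.symm.trans hρ'.leaves_eq) hle
  rw [← Ar.hom_eq_hom_iff, ef, eg, e, ← Category.assoc]
  exact congrArg (· ≫ n'.hom) ((hτ.comp hρ).hom_eq hρ')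

/-- Auxiliary Lemma. -/
theorem stmt13 {V : Type} [DecidableEq V] {A B : Fm V} (f g : Ar V A B)
    (hdf : Developed f) (hdg : Developed g)
    (hrf : rLess f) (hrg : rLess g)
    (hsf : dsLess f) (hsg : dsLess g)
    (hdiv : Diversified A B)
    (hnf : sNormal f) (hng : sNormal g) :
    Eqv f g :=
  stmt13_general f g hrf hrg hsf hsg hdiv

end DP
end
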